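/- arXiv:2605.12336 — 5 statements merged into one kernel-verified Lean document; each statement's English description precedes it below -/
import Mathlib

section
/- Let n ≥ 2 and let 1 ≤ a < b ≤ n. The set of cyclic flats of the rank-2 Schubert matroid S(a,b) on [n] is: (1) {[n−2]} if a = n−1 and b = n; (2) {[a−1], [n−1]} if b = n and a ≤ n−2; (3) {[a−1], [n]} if b = a+1 and b ≤ n−1; (4) {[a−1], [b−1], [n]} if a+2 ≤ b ≤ n−1. In particular S(a,b) has exactly the loops [a−1], and in case (1) its unique basis is {n−1, n}. -/
namespace PaperPOAM

variable {α : Type*}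

/-- A circuit of a matroid: a minimal dependent set. -/
def IsCircuit (M : Matroid α) (C : Set α) : Prop :=
  M.Dep C ∧ ∀ D, D ⊂ C → ¬ M.Dep D

/-- A loop of a matroid: an element whose singleton is dependent. -/
def IsLoop (M : Matroid α) (e : α) : Prop := M.Dep {e}

/-- The set of loops of a matroid. -/
def loops (M : Matroid α) : Set α := {e | IsLoop M e}

/-- A coloop: an element of the ground set contained in every base. -/
def IsColoop (M : Matroid α) (e : α) : Prop := e ∈ M.E ∧ ∀ B, M.IsBase B → e ∈ B

/-- A cyclic flat: a flat that is a union of circuits, i.e. a flat each of whose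
elements lies in a circuit contained in the flat. -/
def IsCyclicFlat (M : Matroid α) (F : Set α) : Prop :=
  M.IsFlat F ∧ ∀ e ∈ F, ∃ C, IsCircuit M C ∧ C ⊆ F ∧ e ∈ C

/-- The rank of a set in a matroid: the largest size of an independent subset. -/
noncomputable def rkOf (M : Matroid α) (X : Set α) : ℕ :=
  sSup {n | ∃ I, M.Indep I ∧ I ⊆ X ∧ I.ncard = n}

/-- The matroid has rank `r`: every base has `r` elements. -/
def RankEq (M : Matroid α) (r : ℕ) : Prop := ∀ B, M.IsBase B → B.ncard = r

/-- Two matroids are isomorphic: there is a bijection between the ground sets carrying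
the bases of one exactly onto the bases of the other. -/
def MatroidIso (M N : Matroid α) : Prop :=
  ∃ f : α → α, Set.BijOn f M.E N.E ∧ ∀ B, B ⊆ M.E → (M.IsBase B ↔ N.IsBase (f '' B))

/-- `M` is the rank-2 Schubert matroid `S(a,b)` on `{1,…,n}`: its bases are exactly the
two-element subsets `{i,j}` of `{1,…,n}` with `i < j`, `a ≤ i`, `b ≤ j`. -/
def IsSchubert2 (n a b : ℕ) (M : Matroid ℕ) : Prop :=
  M.E = Set.Icc 1 n ∧
  ∀ B, M.IsBase B ↔ ∃ i j, i < j ∧ a ≤ i ∧ b ≤ j ∧ 1 ≤ i ∧ j ≤ n ∧ B = ({i, j} : Set ℕ)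

/-- `M` is the rank-3 Schubert matroid `S(a,b,c)` on `{1,…,n}`: its bases are exactly the
three-element subsets `{i,j,k}` of `{1,…,n}` with `i < j < k`, `a ≤ i`, `b ≤ j`, `c ≤ k`. -/
def IsSchubert3 (n a b c : ℕ) (M : Matroid ℕ) : Prop :=
  M.E = Set.Icc 1 n ∧
  ∀ B, M.IsBase B ↔ ∃ i j k, i < j ∧ j < k ∧ a ≤ i ∧ b ≤ j ∧ c ≤ k ∧ 1 ≤ i ∧ k ≤ n ∧
    B = ({i, j, k} : Set ℕ)

end PaperPOAM

namespace PaperPOAM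

open Set

variable {n a b : ℕ} {M : Matroid ℕ}

lemma mem_base_bounds (hM : IsSchubert2 n a b M) (hab : a < b) {B : Set ℕ} {e : ℕ}
    (hB : M.IsBase B) (he : e ∈ B) : a ≤ e ∧ e ≤ n := by
  obtain ⟨i, j, hij, hai, hbj, hi1, hjn, rfl⟩ := (hM.2 B).1 hB
  simp only [mem_insert_iff, mem_singleton_iff] at he
  rcases he with rfl | rfl <;> omega

lemma exists_ge_b (hM : IsSchubert2 n a b M) {B : Set ℕ} (hB : M.IsBase B) :
    ∃ e ∈ B, b ≤ e := by
  obtain ⟨i, j, hij, hai, hbj, hi1, hjn, rfl⟩ := (hM.2 B).1 hB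
  exact ⟨j, by simp, hbj⟩

lemma make_base (hM : IsSchubert2 n a b M) (ha : 1 ≤ a) {x y : ℕ}
    (hax : a ≤ x) (hxy : x < y) (hby : b ≤ y) (hyn : y ≤ n) : M.IsBase {x, y} :=
  (hM.2 _).2 ⟨x, y, hxy, hax, hby, by omega, hyn, rfl⟩

lemma indep_singleton (hM : IsSchubert2 n a b M) (ha : 1 ≤ a) (hab : a < b) (hbn : b ≤ n)
    {e : ℕ} (hae : a ≤ e) (hen : e ≤ n) : M.Indep {e} := by
  rcases le_or_gt b e with h | h
  · exact Matroid.indep_iff.2 ⟨{a, e}, make_base hM ha le_rfl (by omega) h hen, by simp⟩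
  · exact Matroid.indep_iff.2 ⟨{e, b}, make_base hM ha hae h le_rfl hbn, by simp⟩

lemma dep_singleton (hM : IsSchubert2 n a b M) (hab : a < b) (hbn : b ≤ n)
    {e : ℕ} (h1 : 1 ≤ e) (hea : e < a) : M.Dep {e} := by
  rw [Matroid.dep_iff]
  refine ⟨fun hI => ?_, ?_⟩
  · obtain ⟨B, hB, hsub⟩ := Matroid.indep_iff.1 hI
    have := mem_base_bounds hM hab hB (hsub rfl)
    omega
  · rw [hM.1]
    exact singleton_subset_iff.2 (by simp [mem_Icc]; omega)

lemma singleton_ge (hM : IsSchubert2 n a b M) (hab : a < b) {e : ℕ}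
    (hI : M.Indep {e}) : a ≤ e ∧ e ≤ n := by
  obtain ⟨B, hB, hsub⟩ := Matroid.indep_iff.1 hI
  exact mem_base_bounds hM hab hB (hsub rfl)

lemma indep_cases (hM : IsSchubert2 n a b M) {I : Set ℕ} (hI : M.Indep I) :
    I = ∅ ∨ (∃ e, I = {e}) ∨ M.IsBase I := by
  obtain ⟨B, hB, hsub⟩ := Matroid.indep_iff.1 hI
  obtain ⟨i, j, hij, hai, hbj, hi1, hjn, rfl⟩ := (hM.2 B).1 hB
  rcases Set.subset_pair_iff_eq.1 hsub with h | h | h | h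
  · exact Or.inl h
  · exact Or.inr (Or.inl ⟨i, h⟩)
  · exact Or.inr (Or.inl ⟨j, h⟩)
  · exact Or.inr (Or.inr (h ▸ hB))

lemma indep_pair_base (hM : IsSchubert2 n a b M) {x y : ℕ} (hxy : x ≠ y)
    (hI : M.Indep {x, y}) : M.IsBase {x, y} := by
  rcases indep_cases hM hI with h | ⟨e, h⟩ | h
  · exact absurd h (Set.insert_nonempty _ _).ne_empty
  · exfalso
    have hx : x ∈ ({e} : Set ℕ) := h ▸ (by simp)
    have hy : y ∈ ({e} : Set ℕ) := h ▸ (by simp)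
    simp at hx hy
    omega
  · exact h

lemma base_elts (hM : IsSchubert2 n a b M) {x y : ℕ} (hB : M.IsBase ({x, y} : Set ℕ))
    (hxy : x < y) : a ≤ x ∧ b ≤ y ∧ y ≤ n := by
  obtain ⟨i, j, hij, hai, hbj, hi1, hjn, hEq⟩ := (hM.2 _).1 hB
  have hx : x = i ∨ x = j := by
    have : x ∈ ({i, j} : Set ℕ) := hEq ▸ (by simp)
    simpa using this
  have hy : y = i ∨ y = j := by
    have : y ∈ ({i, j} : Set ℕ) := hEq ▸ (by simp)
    simpa using this
  rcases hx with h1 | h1 <;> rcases hy with h2 | h2 <;> omega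

lemma dep_three (hM : IsSchubert2 n a b M) {x y z : ℕ}
    (hxy : x ≠ y) (hyz : y ≠ z) (hxz : x ≠ z)
    (h1x : 1 ≤ x) (hxn : x ≤ n) (h1y : 1 ≤ y) (hyn : y ≤ n) (h1z : 1 ≤ z) (hzn : z ≤ n) :
    M.Dep {x, y, z} := by
  rw [Matroid.dep_iff]
  constructor
  · intro hI
    obtain ⟨B, hB, hsub⟩ := Matroid.indep_iff.1 hI
    obtain ⟨i, j, hij, hai, hbj, hi1, hjn, rfl⟩ := (hM.2 B).1 hB
    have hx : x ∈ ({i, j} : Set ℕ) := hsub (by simp)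
    have hy : y ∈ ({i, j} : Set ℕ) := hsub (by simp)
    have hz : z ∈ ({i, j} : Set ℕ) := hsub (by simp)
    simp only [mem_insert_iff, mem_singleton_iff] at hx hy hz
    rcases hx with h | h <;> rcases hy with h' | h' <;> rcases hz with h'' | h'' <;> omega
  · rw [hM.1]
    intro t ht
    simp only [mem_insert_iff, mem_singleton_iff] at ht
    simp only [mem_Icc]
    rcases ht with rfl | rfl | rfl <;> omega

lemma circuit_loop (hM : IsSchubert2 n a b M) (hab : a < b) (hbn : b ≤ n)
    {e : ℕ} (h1 : 1 ≤ e) (hea : e < a) : IsCircuit M {e} := by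
  refine ⟨dep_singleton hM hab hbn h1 hea, fun D hD => ?_⟩
  rw [Set.ssubset_singleton_iff] at hD
  subst hD
  exact M.empty_indep.not_dep

lemma circuit_pair (hM : IsSchubert2 n a b M) (ha : 1 ≤ a) (hbn : b ≤ n)
    {x y : ℕ} (hax : a ≤ x) (hxy : x < y) (hyb : y < b) : IsCircuit M {x, y} := by
  have hab : a < b := by omega
  constructor
  · rw [Matroid.dep_iff]
    constructor
    · intro hI
      have hB := indep_pair_base hM (by omega) hI
      have := base_elts hM hB hxy
      omega
    · rw [hM.1]
      intro t ht
      simp only [mem_insert_iff, mem_singleton_iff] at ht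
      simp only [mem_Icc]
      rcases ht with rfl | rfl <;> omega
  · intro D hD
    have hne := hD.ne
    rcases Set.subset_pair_iff_eq.1 hD.subset with rfl | rfl | rfl | h
    · exact M.empty_indep.not_dep
    · exact (indep_singleton hM ha hab hbn hax (by omega)).not_dep
    · exact (indep_singleton hM ha hab hbn (by omega) (by omega)).not_dep
    · exact absurd h hne

lemma circuit_triple (hM : IsSchubert2 n a b M) (ha : 1 ≤ a)
    {x y z : ℕ} (hax : a ≤ x) (hxy : x < y) (hyz : y < z) (hby : b ≤ y) (hzn : z ≤ n) :
    IsCircuit M {x, y, z} := by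
  constructor
  · exact dep_three hM (by omega) (by omega) (by omega) (by omega) (by omega) (by omega)
      (by omega) (by omega) hzn
  · intro D hD
    obtain ⟨e, heC, heD⟩ := Set.exists_of_ssubset hD
    have hsub := hD.subset
    have hbase : ∃ B, M.IsBase B ∧ D ⊆ B := by
      simp only [mem_insert_iff, mem_singleton_iff] at heC
      rcases heC with rfl | rfl | rfl
      · refine ⟨{y, z}, make_base hM ha (by omega) hyz (by omega) hzn, fun f hf => ?_⟩
        have hf3 := hsub hf
        simp only [mem_insert_iff, mem_singleton_iff] at hf3 ⊢
        rcases hf3 with rfl | h | h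
        · exact absurd hf heD
        · exact Or.inl h
        · exact Or.inr h
      · refine ⟨{x, z}, make_base hM ha hax (by omega) (by omega) hzn, fun f hf => ?_⟩
        have hf3 := hsub hf
        simp only [mem_insert_iff, mem_singleton_iff] at hf3 ⊢
        rcases hf3 with h | rfl | h
        · exact Or.inl h
        · exact absurd hf heD
        · exact Or.inr h
      · refine ⟨{x, y}, make_base hM ha hax hxy hby (by omega), fun f hf => ?_⟩
        have hf3 := hsub hf
        simp only [mem_insert_iff, mem_singleton_iff] at hf3 ⊢
        rcases hf3 with h | h | rfl
        · exact Or.inl h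
        · exact Or.inr h
        · exact absurd hf heD
    obtain ⟨B, hB, hDB⟩ := hbase
    exact (hB.indep.subset hDB).not_dep

lemma subset_E_of_le (hM : IsSchubert2 n a b M) {s : Set ℕ} {k : ℕ} (hk : k ≤ n)
    (hs : s ⊆ Icc 1 k) : s ⊆ M.E := by
  rw [hM.1]
  intro t ht
  have := hs ht
  simp only [mem_Icc] at this ⊢
  omega

lemma basis_empty (hM : IsSchubert2 n a b M) (hab : a < b) (hbn : b ≤ n)
    {X : Set ℕ} (hX : X ⊆ Icc 1 (a - 1)) : M.IsBasis ∅ X := by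
  have hXE : X ⊆ M.E := subset_E_of_le hM (by omega) hX
  rw [Matroid.isBasis_iff hXE]
  refine ⟨M.empty_indep, empty_subset _, fun J hJ _ hJX => ?_⟩
  by_contra hne
  obtain ⟨f, hf⟩ := Set.nonempty_iff_ne_empty.2 (fun h => hne (h ▸ rfl))
  have hfX := hX (hJX hf)
  simp only [mem_Icc] at hfX
  exact (hJ.subset (singleton_subset_iff.2 hf)).not_dep
    (dep_singleton hM hab hbn (by omega) (by omega))


lemma flat_loops (hM : IsSchubert2 n a b M) (ha : 1 ≤ a) (hab : a < b) (hbn : b ≤ n) :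
    M.IsFlat (Icc 1 (a - 1)) := by
  refine ⟨fun I X hIF hIX => ?_, subset_E_of_le hM (by omega) subset_rfl⟩
  have hI0 : I = ∅ := by
    by_contra hne
    obtain ⟨f, hf⟩ := Set.nonempty_iff_ne_empty.2 hne
    have hfF := hIF.subset hf
    simp only [mem_Icc] at hfF
    exact (hIF.indep.subset (singleton_subset_iff.2 hf)).not_dep
      (dep_singleton hM hab hbn (by omega) (by omega))
  subst hI0
  intro f hfX
  have hXE := hIX.subset_ground
  have hfE := hXE hfX
  rw [hM.1] at hfE
  simp only [mem_Icc] at hfE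
  have hni : ¬ M.Indep {f} := by
    intro hf
    have h3 := ((Matroid.isBasis_iff hXE).1 hIX).2.2 {f} hf (empty_subset _)
      (singleton_subset_iff.2 hfX)
    exact (Set.singleton_nonempty f).ne_empty h3.symm
  have hfa : f < a := by
    by_contra h
    exact hni (indep_singleton hM ha hab hbn (by omega) hfE.2)
  simp only [mem_Icc]
  omega

lemma flat_prepar (hM : IsSchubert2 n a b M) (ha : 1 ≤ a) (hab : a < b) (hbn : b ≤ n) :
    M.IsFlat (Icc 1 (b - 1)) := by
  refine ⟨fun I X hIF hIX => ?_, subset_E_of_le hM (by omega) subset_rfl⟩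
  have hIne : I.Nonempty := by
    rw [Set.nonempty_iff_ne_empty]
    rintro rfl
    have h3 := ((Matroid.isBasis_iff hIF.subset_ground).1 hIF).2.2 {a}
      (indep_singleton hM ha hab hbn le_rfl (by omega)) (empty_subset _)
      (singleton_subset_iff.2 (by simp only [mem_Icc]; omega))
    exact (Set.singleton_nonempty a).ne_empty h3.symm
  obtain ⟨x, hx⟩ := hIne
  have hxF := hIF.subset hx
  simp only [mem_Icc] at hxF
  have hxi : M.Indep {x} := hIF.indep.subset (singleton_subset_iff.2 hx)
  have hxa : a ≤ x := (singleton_ge hM hab hxi).1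
  have hIeq : I = {x} := by
    rcases indep_cases hM hIF.indep with h | ⟨e, h⟩ | h
    · rw [h] at hx; exact absurd hx (Set.notMem_empty x)
    · rw [h] at hx ⊢
      simp only [mem_singleton_iff] at hx
      rw [hx]
    · exfalso
      obtain ⟨e, heI, hbe⟩ := exists_ge_b hM h
      have := hIF.subset heI
      simp only [mem_Icc] at this
      omega
  subst hIeq
  intro f hfX
  have hXE := hIX.subset_ground
  have hfE := hXE hfX
  rw [hM.1] at hfE
  simp only [mem_Icc] at hfE
  simp only [mem_Icc]
  by_contra hfF
  have hbf : b ≤ f := by omega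
  have hxf : x < f := by omega
  have hbase := make_base hM ha hxa hxf hbf hfE.2
  have h3 := ((Matroid.isBasis_iff hXE).1 hIX).2.2 {x, f} hbase.indep (by simp)
    (insert_subset (hIX.subset rfl) (singleton_subset_iff.2 hfX))
  have : f ∈ ({x} : Set ℕ) := h3 ▸ (by simp)
  simp only [mem_singleton_iff] at this
  omega

lemma flat_ground (hM : IsSchubert2 n a b M) : M.IsFlat (Icc 1 n) := hM.1 ▸ M.ground_isFlat

lemma cyclic_loops (hM : IsSchubert2 n a b M) (ha : 1 ≤ a) (hab : a < b) (hbn : b ≤ n) :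
    IsCyclicFlat M (Icc 1 (a - 1)) := by
  refine ⟨flat_loops hM ha hab hbn, fun e he => ?_⟩
  simp only [mem_Icc] at he
  exact ⟨{e}, circuit_loop hM hab hbn (by omega) (by omega),
    singleton_subset_iff.2 (by simp only [mem_Icc]; omega), rfl⟩

lemma cyclic_prepar (hM : IsSchubert2 n a b M) (ha : 1 ≤ a) (hbn : b ≤ n)
    (h2 : a + 2 ≤ b) : IsCyclicFlat M (Icc 1 (b - 1)) := by
  refine ⟨flat_prepar hM ha (by omega) hbn, fun e he => ?_⟩
  simp only [mem_Icc] at he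
  rcases lt_or_ge e a with h | h
  · exact ⟨{e}, circuit_loop hM (by omega) hbn (by omega) h,
      singleton_subset_iff.2 (by simp only [mem_Icc]; omega), rfl⟩
  · by_cases hea : e = a
    · refine ⟨{a, a + 1}, circuit_pair hM ha hbn le_rfl (by omega) (by omega), ?_, by simp [hea]⟩
      intro t ht
      simp only [mem_insert_iff, mem_singleton_iff] at ht
      simp only [mem_Icc]
      rcases ht with rfl | rfl <;> omega
    · refine ⟨{a, e}, circuit_pair hM ha hbn le_rfl (by omega) (by omega), ?_, by simp⟩
      intro t ht
      simp only [mem_insert_iff, mem_singleton_iff] at ht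
      simp only [mem_Icc]
      rcases ht with rfl | rfl <;> omega

lemma cyclic_ground (hM : IsSchubert2 n a b M) (ha : 1 ≤ a) (hab : a < b)
    (hb1 : b ≤ n - 1) (hn : 2 ≤ n) : IsCyclicFlat M (Icc 1 n) := by
  refine ⟨flat_ground hM, fun e he => ?_⟩
  simp only [mem_Icc] at he
  rcases lt_or_ge e a with h | h
  · exact ⟨{e}, circuit_loop hM hab (by omega) (by omega) h,
      singleton_subset_iff.2 (by simp only [mem_Icc]; omega), rfl⟩
  · rcases lt_or_ge e b with h2 | h2
    · exact ⟨{e, b, n}, circuit_triple hM ha h h2 (by omega) le_rfl le_rfl,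
        by intro t ht; simp only [mem_insert_iff, mem_singleton_iff] at ht;
           simp only [mem_Icc]; rcases ht with rfl | rfl | rfl <;> omega, by simp⟩
    · rcases lt_or_ge e n with h3 | h3
      · exact ⟨{a, e, n}, circuit_triple hM ha le_rfl (by omega) h3 h2 le_rfl,
          by intro t ht; simp only [mem_insert_iff, mem_singleton_iff] at ht;
             simp only [mem_Icc]; rcases ht with rfl | rfl | rfl <;> omega, by simp⟩
      · have hen : e = n := by omega
        exact ⟨{a, b, n}, circuit_triple hM ha le_rfl hab (by omega) le_rfl le_rfl,
          by intro t ht; simp only [mem_insert_iff, mem_singleton_iff] at ht;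
             simp only [mem_Icc]; rcases ht with rfl | rfl | rfl <;> omega,
          by simp [hen]⟩

lemma cyclic_classify (hM : IsSchubert2 n a b M) (ha : 1 ≤ a) (hab : a < b) (hbn : b ≤ n)
    {F : Set ℕ} (hF : IsCyclicFlat M F) :
    F = Icc 1 (a - 1) ∨ (a + 2 ≤ b ∧ F = Icc 1 (b - 1)) ∨ (b ≤ n - 1 ∧ F = Icc 1 n) := by
  obtain ⟨hflat, hcyc⟩ := hF
  have hFE : F ⊆ M.E := hflat.subset_ground
  have hFE' : ∀ f ∈ F, 1 ≤ f ∧ f ≤ n := by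
    intro f hf
    have := hFE hf
    rw [hM.1] at this
    simpa only [mem_Icc] using this
  by_cases hnl : ∃ e ∈ F, a ≤ e
  · obtain ⟨e, heF, hae⟩ := hnl
    obtain ⟨C, ⟨hCdep, hCmin⟩, hCF, heC⟩ := hcyc e heF
    have hCne : ∃ f ∈ C, f ≠ e := by
      by_contra hcon
      push_neg at hcon
      have hCeq : C = {e} :=
        Set.Subset.antisymm (fun f hf => by simp [hcon f hf]) (singleton_subset_iff.2 heC)
      rw [hCeq] at hCdep
      exact (indep_singleton hM ha hab hbn hae (hFE' e heF).2).not_dep hCdep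
    obtain ⟨f, hfC, hfe⟩ := hCne
    have hfI : ¬ M.Dep {f} := by
      refine hCmin {f} (Set.ssubset_iff_subset_ne.2 ⟨singleton_subset_iff.2 hfC, fun h => ?_⟩)
      rw [← h] at heC
      simp only [mem_singleton_iff] at heC
      exact hfe heC.symm
    have hfF : f ∈ F := hCF hfC
    have hfbd := hFE' f hfF
    have hfa : a ≤ f := by
      by_contra h
      exact hfI (dep_singleton hM hab hbn (by omega) (by omega))
    by_cases hbase : ∃ x ∈ F, ∃ y ∈ F, x < y ∧ a ≤ x ∧ b ≤ y
    · obtain ⟨x, hx, y, hy, hxy, hax, hby⟩ := hbase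
      have hyn := (hFE' y hy).2
      have hB : M.IsBase {x, y} := make_base hM ha hax hxy hby hyn
      have hBF : ({x, y} : Set ℕ) ⊆ F := insert_subset hx (singleton_subset_iff.2 hy)
      have hFeq : F = M.E := by
        refine Set.Subset.antisymm hFE (hflat.subset_of_isBasis_of_isBasis ?_ hB.isBasis_ground)
        rw [Matroid.isBasis_iff hFE]
        exact ⟨hB.indep, hBF, fun J hJ hBJ _ => hB.eq_of_subset_indep hJ hBJ⟩
      refine Or.inr (Or.inr ⟨?_, hFeq.trans hM.1⟩)
      -- show b ≤ n - 1 using a circuit containing n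
      have hn2 : 2 ≤ n := by omega
      have hnF : n ∈ F := by
        rw [hFeq, hM.1]
        simp only [mem_Icc]
        omega
      obtain ⟨C', ⟨hC'dep, hC'min⟩, hC'F, hnC'⟩ := hcyc n hnF
      have hC'E : ∀ t ∈ C', 1 ≤ t ∧ t ≤ n := by
        intro t ht
        have := hC'dep.subset_ground ht
        rw [hM.1] at this
        simpa only [mem_Icc] using this
      have hC'a : ∀ t ∈ C', a ≤ t := by
        intro t ht
        by_cases hte : t = n
        · omega
        have hss : ({t} : Set ℕ) ⊂ C' := by
          refine Set.ssubset_iff_subset_ne.2 ⟨singleton_subset_iff.2 ht, fun h => ?_⟩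
          rw [← h] at hnC'
          simp only [mem_singleton_iff] at hnC'
          exact hte hnC'.symm
        have hnd := hC'min {t} hss
        by_contra h
        exact hnd (dep_singleton hM hab hbn (hC'E t ht).1 (by omega))
      have hCne' : ∃ u ∈ C', u ≠ n := by
        by_contra hcon
        push_neg at hcon
        have hC'eq : C' = {n} :=
          Set.Subset.antisymm (fun t ht => by simp [hcon t ht]) (singleton_subset_iff.2 hnC')
        rw [hC'eq] at hC'dep
        exact (indep_singleton hM ha hab hbn (by omega) le_rfl).not_dep hC'dep
      obtain ⟨u, huC, hun⟩ := hCne'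
      have hun' : u < n := by have := hC'E u huC; omega
      have hg : ∃ g ∈ C', g ≠ u ∧ g ≠ n := by
        by_contra hcon
        push_neg at hcon
        have hC'eq : C' = {u, n} := by
          refine Set.Subset.antisymm (fun t ht => ?_) ?_
          · by_cases h : t = u
            · simp [h]
            · simp [hcon t ht h]
          · intro t ht
            simp only [mem_insert_iff, mem_singleton_iff] at ht
            rcases ht with rfl | rfl
            · exact huC
            · exact hnC'
        rw [hC'eq] at hC'dep
        exact (make_base hM ha (hC'a u huC) hun' hbn le_rfl).indep.not_dep hC'dep
      obtain ⟨g, hgC, hgu, hgn⟩ := hg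
      have hga := hC'a g hgC
      have hgE := hC'E g hgC
      have hua := hC'a u huC
      have hss : ({u, g} : Set ℕ) ⊂ C' := by
        refine Set.ssubset_iff_subset_ne.2
          ⟨insert_subset huC (singleton_subset_iff.2 hgC), fun h => ?_⟩
        rw [← h] at hnC'
        simp only [mem_insert_iff, mem_singleton_iff] at hnC'
        omega
      have hind : M.Indep {u, g} := by
        refine Matroid.indep_of_not_dep (hC'min _ hss) ?_
        rw [hM.1]
        intro t ht
        simp only [mem_insert_iff, mem_singleton_iff] at ht
        simp only [mem_Icc]
        rcases ht with rfl | rfl <;> omega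
      have hB2 : M.IsBase {u, g} := indep_pair_base hM (fun h => hgu h.symm) hind
      rcases lt_or_gt_of_ne (fun h => hgu h.symm) with h | h
      · have := base_elts hM hB2 h
        omega
      · have hB2' : M.IsBase {g, u} := by rwa [Set.pair_comm] at hB2
        have := base_elts hM hB2' h
        omega
    · push_neg at hbase
      have heb : e < b := by
        by_contra hcon
        push_neg at hcon
        rcases lt_or_gt_of_ne hfe with h | h
        · have := hbase f hfF e heF h hfa
          omega
        · have := hbase e heF f hfF h hae
          omega
      have hFb : ∀ t ∈ F, t < b := by
        intro t ht
        by_contra hcon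
        have := hbase e heF t ht (by omega) hae
        omega
      have hab2 : a + 2 ≤ b := by
        have := hFb f hfF
        have := hFb e heF
        omega
      refine Or.inr (Or.inl ⟨hab2, Set.Subset.antisymm (fun t ht => ?_) ?_⟩)
      · simp only [mem_Icc]
        have := hFE' t ht
        have := hFb t ht
        omega
      · intro g hg
        simp only [mem_Icc] at hg
        by_contra hgF
        have key : ∀ X, X ⊆ M.E → e ∈ X → (∀ t ∈ X, t < b) → M.IsBasis {e} X := by
          intro X hXE heX hXb
          rw [Matroid.isBasis_iff hXE]
          refine ⟨indep_singleton hM ha hab hbn hae (hFE' e heF).2,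
            singleton_subset_iff.2 heX, fun J hJ heJ hJX => ?_⟩
          rcases indep_cases hM hJ with h | ⟨u, h⟩ | h
          · subst h; exact absurd (heJ rfl) (notMem_empty e)
          · subst h
            have : e ∈ ({u} : Set ℕ) := heJ rfl
            simp only [mem_singleton_iff] at this
            rw [this]
          · exfalso
            obtain ⟨u, huJ, hbu⟩ := exists_ge_b hM h
            have := hXb u (hJX huJ)
            omega
        have h1 : M.IsBasis {e} F := key F hFE heF hFb
        have h2 : M.IsBasis {e} (insert g F) := by
          refine key _ ?_ (mem_insert_of_mem g heF) ?_
          · intro t ht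
            rcases ht with rfl | ht
            · rw [hM.1]; simp only [mem_Icc]; omega
            · exact hFE ht
          · intro t ht
            rcases ht with rfl | ht
            · omega
            · exact hFb t ht
        exact hgF (hflat.subset_of_isBasis_of_isBasis h1 h2 (mem_insert g F))
  · push_neg at hnl
    refine Or.inl (Set.Subset.antisymm (fun t ht => ?_) (fun g hg => ?_))
    · simp only [mem_Icc]
      have := hFE' t ht
      have := hnl t ht
      omega
    · simp only [mem_Icc] at hg
      by_contra hgF
      have hFsub : F ⊆ Icc 1 (a - 1) := by
        intro t ht
        simp only [mem_Icc]
        have := hFE' t ht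
        have := hnl t ht
        omega
      have h1 : M.IsBasis ∅ F := basis_empty hM hab hbn hFsub
      have h2 : M.IsBasis ∅ (insert g F) := by
        refine basis_empty hM hab hbn ?_
        intro t ht
        rcases ht with rfl | ht
        · simp only [mem_Icc]; omega
        · exact hFsub ht
      exact hgF (hflat.subset_of_isBasis_of_isBasis h1 h2 (mem_insert g F))


/-- the cyclic flats of the rank-2 Schubert matroid `S(a,b)` on `{1,…,n}`,
in the four cases, together with the facts that its loops are exactly `{1,…,a−1}` and
that in case (1) its unique basis is `{n−1, n}`. -/
theorem statement_3 (n a b : ℕ) (hn : 2 ≤ n) (ha : 1 ≤ a) (hab : a < b) (hbn : b ≤ n)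
    (M : Matroid ℕ) (hM : IsSchubert2 n a b M) :
    ((a = n - 1 ∧ b = n) →
        {F | IsCyclicFlat M F} = {Set.Icc 1 (n - 2)} ∧
        (∀ B, M.IsBase B ↔ B = ({n - 1, n} : Set ℕ))) ∧
    ((b = n ∧ a ≤ n - 2) →
        {F | IsCyclicFlat M F} = {Set.Icc 1 (a - 1), Set.Icc 1 (n - 1)}) ∧
    ((b = a + 1 ∧ b ≤ n - 1) →
        {F | IsCyclicFlat M F} = {Set.Icc 1 (a - 1), Set.Icc 1 n}) ∧
    ((a + 2 ≤ b ∧ b ≤ n - 1) →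
        {F | IsCyclicFlat M F} = {Set.Icc 1 (a - 1), Set.Icc 1 (b - 1), Set.Icc 1 n}) ∧
    loops M = Set.Icc 1 (a - 1) := by
  obtain ⟨hE, hM2⟩ := hM
  have hM' : IsSchubert2 n a b M := ⟨hE, hM2⟩
  refine ⟨?_, ?_, ?_, ?_, ?_⟩
  · rintro ⟨ha1, hb1⟩
    constructor
    · ext F
      simp only [Set.mem_setOf_eq, Set.mem_singleton_iff]
      constructor
      · intro hF
        rcases cyclic_classify hM' ha hab hbn hF with h | ⟨h2, _⟩ | ⟨h2, _⟩
        · rw [h]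
          have : a - 1 = n - 2 := by omega
          rw [this]
        · omega
        · omega
      · rintro rfl
        have : n - 2 = a - 1 := by omega
        rw [this]
        exact cyclic_loops hM' ha hab hbn
    · intro B
      rw [hM2 B]
      constructor
      · rintro ⟨i, j, hij, hai, hbj, hi1, hjn, rfl⟩
        have h1 : i = n - 1 := by omega
        have h2 : j = n := by omega
        rw [h1, h2]
      · rintro rfl
        exact ⟨n - 1, n, by omega, by omega, by omega, by omega, le_rfl, rfl⟩
  · rintro ⟨hb1, ha2⟩
    ext F
    simp only [Set.mem_setOf_eq, Set.mem_insert_iff, Set.mem_singleton_iff]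
    constructor
    · intro hF
      rcases cyclic_classify hM' ha hab hbn hF with h | ⟨h2, h⟩ | ⟨h2, _⟩
      · exact Or.inl h
      · right
        rw [h]
        have : b - 1 = n - 1 := by omega
        rw [this]
      · omega
    · rintro (rfl | rfl)
      · exact cyclic_loops hM' ha hab hbn
      · have : n - 1 = b - 1 := by omega
        rw [this]
        exact cyclic_prepar hM' ha hbn (by omega)
  · rintro ⟨hb3, hb1⟩
    ext F
    simp only [Set.mem_setOf_eq, Set.mem_insert_iff, Set.mem_singleton_iff]
    constructor
    · intro hF
      rcases cyclic_classify hM' ha hab hbn hF with h | ⟨h2, _⟩ | ⟨_, h⟩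
      · exact Or.inl h
      · omega
      · exact Or.inr h
    · rintro (rfl | rfl)
      · exact cyclic_loops hM' ha hab hbn
      · exact cyclic_ground hM' ha hab hb1 hn
  · rintro ⟨hb2, hb1⟩
    ext F
    simp only [Set.mem_setOf_eq, Set.mem_insert_iff, Set.mem_singleton_iff]
    constructor
    · intro hF
      rcases cyclic_classify hM' ha hab hbn hF with h | ⟨_, h⟩ | ⟨_, h⟩
      · exact Or.inl h
      · exact Or.inr (Or.inl h)
      · exact Or.inr (Or.inr h)
    · rintro (rfl | rfl | rfl)
      · exact cyclic_loops hM' ha hab hbn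
      · exact cyclic_prepar hM' ha hbn hb2
      · exact cyclic_ground hM' ha hab hb1 hn
  · ext e
    simp only [loops, IsLoop, Set.mem_setOf_eq, Set.mem_Icc]
    constructor
    · intro h
      have hEe := (Matroid.dep_iff.1 h).2 rfl
      rw [hE] at hEe
      simp only [Set.mem_Icc] at hEe
      have : e < a := by
        by_contra hc
        exact (indep_singleton hM' ha hab hbn (by omega) hEe.2).not_dep h
      omega
    · intro h
      exact dep_singleton hM' hab hbn (by omega) (by omega)

end PaperPOAM
end

section
/- Let M be a matroid of rank 2 on [n] = {1, …, n} with no coloops, and suppose the cyclic flats of M do not form a chain under inclusion. Then: (1) the full ground set [n] is a cyclic flat of M, and it contains every cyclic flat of M; (2) every rank-1 cyclic flat F of M satisfies |F| ≥ |L(M)| + 2; and (3) the set of cyclic flats of M is exactly {L(M)} ∪ {F : F is a rank-1 cyclic flat of M} ∪ {[n]}, and M has at least two rank-1 cyclic flats. -/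
namespace PaperPOAM

open Set

private lemma closure_flat' {α : Type*} (M : Matroid α) (X : Set α) :
    M.IsFlat (M.closure X) := by
  exact M.isFlat_closure X

private lemma dep_has_circuit {α : Type*} {M : Matroid α} :
    ∀ (k : ℕ) (D : Set α), D.Finite → D.ncard ≤ k → M.Dep D →
      ∃ C, IsCircuit M C ∧ C ⊆ D := by
  intro k
  induction k with
  | zero =>
      intro D hfin hcard hdep
      have hD : D = ∅ := by
        rw [← Set.ncard_eq_zero hfin]; omega
      exact absurd (hD ▸ hdep) (M.empty_indep.not_dep)
  | succ k ih =>
      intro D hfin hcard hdep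
      by_cases h : ∀ D', D' ⊂ D → ¬ M.Dep D'
      · exact ⟨D, ⟨hdep, h⟩, subset_rfl⟩
      · push_neg at h
        obtain ⟨D', hss, hdep'⟩ := h
        have hlt : D'.ncard < D.ncard := Set.ncard_lt_ncard hss hfin
        obtain ⟨C, hC, hsub⟩ := ih D' (hfin.subset hss.subset) (by omega) hdep'
        exact ⟨C, hC, hsub.trans hss.subset⟩

/-- a rank-2 matroid on `{1,…,n}` without coloops whose cyclic flats do not
form a chain satisfies: (1) `{1,…,n}` is a cyclic flat containing all cyclic flats;
(2) every rank-1 cyclic flat `F` has `|F| ≥ |L(M)| + 2`; (3) the cyclic flats are exactly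
`{L(M)} ∪ {rank-1 cyclic flats} ∪ {[n]}`, and there are at least two rank-1 cyclic flats. -/
theorem statement_5 (n : ℕ) (M : Matroid ℕ) (hE : M.E = Set.Icc 1 n)
    (hrk : RankEq M 2)
    (hcoloop : ∀ e, ¬ IsColoop M e)
    (hnotchain : ¬ ∀ F G, IsCyclicFlat M F → IsCyclicFlat M G → F ⊆ G ∨ G ⊆ F) :
    (IsCyclicFlat M (Set.Icc 1 n) ∧ ∀ F, IsCyclicFlat M F → F ⊆ Set.Icc 1 n) ∧
    (∀ F, IsCyclicFlat M F → rkOf M F = 1 → (loops M).ncard + 2 ≤ F.ncard) ∧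
    ({F | IsCyclicFlat M F} =
        insert (loops M) (insert (Set.Icc 1 n) {F | IsCyclicFlat M F ∧ rkOf M F = 1}) ∧
      2 ≤ {F | IsCyclicFlat M F ∧ rkOf M F = 1}.ncard) := by
  have hfin : M.E.Finite := by rw [hE]; exact Set.finite_Icc 1 n
  have hiFin : ∀ X : Set ℕ, X ⊆ M.E → X.Finite := fun X h => hfin.subset h
  -- every independent set has at most 2 elements
  have hInd2 : ∀ I, M.Indep I → I.ncard ≤ 2 := by
    intro I hI
    obtain ⟨B, hB, hIB⟩ := hI.exists_isBase_superset
    calc I.ncard ≤ B.ncard := Set.ncard_le_ncard hIB (hiFin B hB.subset_ground)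
    _ = 2 := hrk B hB
  -- independent sets of size 2 are bases
  have hBase2 : ∀ I, M.Indep I → I.ncard = 2 → M.IsBase I := by
    intro I hI hc
    obtain ⟨B, hB, hIB⟩ := hI.exists_isBase_superset
    have : I = B := Set.eq_of_subset_of_ncard_le hIB
      (by rw [hrk B hB, hc]) (hiFin B hB.subset_ground)
    exact this ▸ hB
  -- every dependent set contains a circuit
  have hCirc : ∀ D, M.Dep D → ∃ C, IsCircuit M C ∧ C ⊆ D := fun D hD =>
    dep_has_circuit D.ncard D (hiFin D hD.subset_ground) le_rfl hD
  -- every ground element lies in a circuit (no coloops)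
  have hCircE : ∀ e ∈ M.E, ∃ C, IsCircuit M C ∧ e ∈ C := by
    intro e he
    have h := hcoloop e
    simp only [IsColoop, not_and, not_forall] at h
    obtain ⟨B, hB, heB⟩ := h he
    have hdep := hB.insert_dep ⟨he, heB⟩
    obtain ⟨C, hC, hsub⟩ := hCirc _ hdep
    refine ⟨C, hC, ?_⟩
    by_contra heC
    exact hC.1.not_indep (hB.indep.subset (fun x hx =>
      ((hsub hx).resolve_left (by rintro rfl; exact heC hx))))
  -- loops
  have hLoops : loops M = M.closure ∅ := by
    ext e
    rw [M.empty_indep.mem_closure_iff]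
    simp [loops, IsLoop]
  have hLflat : M.IsFlat (loops M) := hLoops ▸ closure_flat' M ∅
  have hLsub : ∀ F, M.IsFlat F → loops M ⊆ F := by
    intro F hF
    rw [hLoops, ← hF.closure]
    exact M.closure_subset_closure (Set.empty_subset F)
  have hLcf : IsCyclicFlat M (loops M) := by
    refine ⟨hLflat, ?_⟩
    intro e he
    refine ⟨{e}, ⟨he, ?_⟩, Set.singleton_subset_iff.mpr he, rfl⟩
    intro D hD
    rw [Set.ssubset_singleton_iff.mp hD]
    exact M.empty_indep.not_dep
  -- ground set is a cyclic flat
  have hEcf : IsCyclicFlat M M.E := by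
    refine ⟨M.ground_isFlat, ?_⟩
    intro e he
    obtain ⟨C, hC, heC⟩ := hCircE e he
    exact ⟨C, hC, hC.1.subset_ground, heC⟩
  -- rkOf facts
  have hS0 : ∀ X : Set ℕ, 0 ∈ {k | ∃ I, M.Indep I ∧ I ⊆ X ∧ I.ncard = k} :=
    fun X => ⟨∅, M.empty_indep, Set.empty_subset X, Set.ncard_empty ℕ⟩
  have hSb : ∀ X : Set ℕ, ∀ k ∈ {k | ∃ I, M.Indep I ∧ I ⊆ X ∧ I.ncard = k}, k ≤ 2 := by
    rintro X k ⟨I, hI, -, rfl⟩; exact hInd2 I hI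
  have hrkle : ∀ X, rkOf M X ≤ 2 := fun X => csSup_le ⟨0, hS0 X⟩ (hSb X)
  have hrkmem : ∀ X, ∃ I, M.Indep I ∧ I ⊆ X ∧ I.ncard = rkOf M X :=
    fun X => Nat.sSup_mem ⟨0, hS0 X⟩ ⟨2, hSb X⟩
  have hrkge : ∀ X I, M.Indep I → I ⊆ X → I.ncard ≤ rkOf M X :=
    fun X I hI hIX => le_csSup ⟨2, hSb X⟩ ⟨I, hI, hIX, rfl⟩
  -- Part 2
  have part2 : ∀ F, IsCyclicFlat M F → rkOf M F = 1 → (loops M).ncard + 2 ≤ F.ncard := by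
    intro F hF hr
    obtain ⟨I, hI, hIF, hc⟩ := hrkmem F
    rw [hr] at hc
    obtain ⟨x, rfl⟩ := Set.ncard_eq_one.mp hc
    have hxF : x ∈ F := hIF rfl
    have hxnl : ¬ IsLoop M x := fun h => h.not_indep hI
    obtain ⟨C, hC, hCF, hxC⟩ := hF.2 x hxF
    obtain ⟨y, hyC, hyx⟩ : ∃ y ∈ C, y ≠ x := by
      by_contra h
      push_neg at h
      have hCx : C = {x} := subset_antisymm h (Set.singleton_subset_iff.mpr hxC)
      exact hxnl (show M.Dep {x} from hCx ▸ hC.1)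
    have hynl : ¬ IsLoop M y := by
      refine hC.2 {y} ?_
      rw [Set.ssubset_iff_subset_ne]
      refine ⟨Set.singleton_subset_iff.mpr hyC, fun h => ?_⟩
      rw [← h] at hxC
      exact hyx hxC.symm
    have hsub2 : loops M ∪ {x, y} ⊆ F := Set.union_subset (hLsub F hF.1)
      (by rintro z (rfl | rfl); exacts [hxF, hCF hyC])
    have hdisj : Disjoint (loops M) {x, y} := by
      rw [Set.disjoint_right]
      rintro z (rfl | rfl)
      exacts [hxnl, hynl]
    have hFfin := hiFin F hF.1.subset_ground
    have hle := Set.ncard_le_ncard hsub2 hFfin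
    rwa [Set.ncard_union_eq hdisj (hFfin.subset (hsub2.trans' Set.subset_union_left))
      (hFfin.subset (hsub2.trans' Set.subset_union_right)),
      Set.ncard_pair (Ne.symm hyx)] at hle
  -- classification of cyclic flats
  have classify : ∀ F, IsCyclicFlat M F → F = loops M ∨ F = M.E ∨ rkOf M F = 1 := by
    intro F hF
    have hFE : F ⊆ M.E := hF.1.subset_ground
    obtain ⟨I, hI, hIF, hc⟩ := hrkmem F
    have h2 := hrkle F
    have h012 : rkOf M F = 0 ∨ rkOf M F = 1 ∨ rkOf M F = 2 := by omega
    rcases h012 with h0 | h1 | h2'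
    · left
      refine subset_antisymm ?_ (hLsub F hF.1)
      intro e heF
      by_contra hel
      have hInd : M.Indep {e} := by
        by_contra hni
        exact hel (⟨hni, Set.singleton_subset_iff.mpr (hFE heF)⟩ : M.Dep {e})
      have := hrkge F {e} hInd (Set.singleton_subset_iff.mpr heF)
      rw [Set.ncard_singleton, h0] at this
      omega
    · right; right; exact h1
    · right; left
      rw [h2'] at hc
      have hBI := hBase2 I hI hc
      refine subset_antisymm hFE ?_
      calc M.E = M.closure I := hBI.closure_eq.symm
      _ ⊆ M.closure F := M.closure_subset_closure hIF
      _ = F := hF.1.closure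
  -- set equality
  have hseteq : {F | IsCyclicFlat M F} =
      insert (loops M) (insert (Set.Icc 1 n) {F | IsCyclicFlat M F ∧ rkOf M F = 1}) := by
    ext F
    simp only [Set.mem_setOf_eq, Set.mem_insert_iff]
    constructor
    · intro hF
      rcases classify F hF with h | h | h
      · exact Or.inl h
      · exact Or.inr (Or.inl (h.trans hE))
      · exact Or.inr (Or.inr ⟨hF, h⟩)
    · rintro (rfl | rfl | ⟨h, -⟩)
      · exact hLcf
      · exact hE ▸ hEcf
      · exact h
  -- at least two rank-1 cyclic flats
  push_neg at hnotchain
  obtain ⟨F, G, hFc, hGc, hFG, hGF⟩ := hnotchain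
  have hF1 : rkOf M F = 1 := by
    rcases classify F hFc with h | h | h
    · exact absurd (h ▸ hLsub G hGc.1) hFG
    · exact absurd (h ▸ hGc.1.subset_ground) hGF
    · exact h
  have hG1 : rkOf M G = 1 := by
    rcases classify G hGc with h | h | h
    · exact absurd (h ▸ hLsub F hFc.1) hGF
    · exact absurd (h ▸ hFc.1.subset_ground) hFG
    · exact h
  have hne : F ≠ G := fun h => hFG (h ▸ subset_rfl)
  have hSfin : {F | IsCyclicFlat M F ∧ rkOf M F = 1}.Finite := by
    refine (hfin.finite_subsets).subset ?_
    intro X hX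
    exact hX.1.1.subset_ground
  have hcard2 : 2 ≤ {F | IsCyclicFlat M F ∧ rkOf M F = 1}.ncard := by
    rw [← Nat.lt_iff_add_one_le]
    exact (Set.one_lt_ncard_iff hSfin).mpr ⟨F, G, ⟨hFc, hF1⟩, ⟨hGc, hG1⟩, hne⟩
  exact ⟨⟨hE ▸ hEcf, fun F hF => hE ▸ hF.1.subset_ground⟩, part2, hseteq, hcard2⟩

end PaperPOAM
end

section
/- Let M and N be matroids of rank 2 on [n] = {1, …, n}. If the symmetrized indicator functions of their base polytopes are equal, i.e., 𝟙(P(M)) = 𝟙(P(N)) as functions ℝ^n → ℝ, then M and N are isomorphic. -/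
namespace PaperPOAM

open scoped Classical in
/-- The 0/1 indicator vector in `ℝ^n` of a subset `B ⊆ {1,…,n}`
(coordinate `j : Fin n` corresponds to the element `j+1`). -/
noncomputable def indVec (n : ℕ) (B : Set ℕ) : Fin n → ℝ :=
  fun j => if ((j : ℕ) + 1) ∈ B then 1 else 0

/-- The base polytope of a matroid on `{1,…,n}`: the convex hull in `ℝ^n` of the
indicator vectors of its bases. -/
noncomputable def basePolytope (n : ℕ) (M : Matroid ℕ) : Set (Fin n → ℝ) :=
  convexHull ℝ {x | ∃ B, M.IsBase B ∧ x = indVec n B}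

/-- The symmetrized indicator function of a subset `X ⊆ ℝ^n`:
`𝟙(X)(x) = (1/n!) ∑ over permutations σ of the coordinates of the 0/1 indicator of X at σ·x`. -/
noncomputable def symInd (n : ℕ) (X : Set (Fin n → ℝ)) : (Fin n → ℝ) → ℝ :=
  fun x => (1 / (n.factorial : ℝ)) *
    ∑ σ : Equiv.Perm (Fin n), Set.indicator X 1 (fun i => x (σ i))

end PaperPOAM

/-!
Evaluate the symmetrized indicator at `x = e_{v₀} + (e_{v₁} + ⋯ + e_{v_m}) / m` for an injective
tuple `v`. For a rank-2 matroid, `x` lies in the base polytope exactly when `v₀` is a nonloop and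
`v₁, …, v_m` lie outside the closure of `v₀`: then `x` is the average of the bases `{v₀, vⱼ}`, and
otherwise it violates `∑_{e ∈ cl X} x_e ≤ |X|` for `X = ∅` or `X = {v₀}`. Permuting `x` permutes
`v`, and `Sₙ` acts transitively on injective tuples, so the number of permutations carrying `x`
into the polytope is a constant times `∑_a (t_a)_m`, summed over the nonloops `a`, where `t_a` is
the number of elements outside `cl {a}`. These falling-factorial moments for `m = 1, …, n - 1`
determine the multiset of the `t_a`, hence the number of nonloops and the multiset of sizes of the
parallel classes. As the bases are the pairs of non-parallel nonloops, these data determine the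
matroid up to isomorphism.
-/

open Finset

theorem Multiset.eq_of_sum_map_descFactorial_eq :
    ∀ {B : ℕ} {μ ν : Multiset ℕ}, (∀ q ∈ μ, q ∈ Set.Icc 1 B) → (∀ q ∈ ν, q ∈ Set.Icc 1 B) →
      (∀ m ∈ Set.Icc 1 B,
        (μ.map (·.descFactorial m)).sum = (ν.map (·.descFactorial m)).sum) → μ = ν
  | 0, μ, ν, hμ, hν, _ => by
    have empty {ρ : Multiset ℕ} (hρ : ∀ q ∈ ρ, q ∈ Set.Icc 1 0) : ρ = 0 :=
      Multiset.eq_zero_of_forall_notMem fun q hq => by simpa using hρ q hq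
    rw [empty hμ, empty hν]
  | B + 1, μ, ν, hμ, hν, h => by
    -- only the copies of the top value `B + 1` survive `descFactorial (B + 1)`
    have split (ρ : Multiset ℕ) :
        ρ = Multiset.replicate (ρ.count (B + 1)) (B + 1) + ρ.filter (· ≠ B + 1) := by
      rw [← Multiset.filter_eq', Multiset.filter_add_not]
    have sum_split (ρ : Multiset ℕ) (m : ℕ) : (ρ.map (·.descFactorial m)).sum =
        ρ.count (B + 1) * (B + 1).descFactorial m +
          ((ρ.filter (· ≠ B + 1)).map (·.descFactorial m)).sum := by
      conv_lhs => rw [split ρ]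
      simp [Multiset.map_replicate]
    have low {ρ : Multiset ℕ} (hρ : ∀ q ∈ ρ, q ∈ Set.Icc 1 (B + 1)) :
        ∀ q ∈ ρ.filter (· ≠ B + 1), q ∈ Set.Icc 1 B := by
      intro q hq
      rw [Multiset.mem_filter] at hq
      have := hρ q hq.1
      simp only [Set.mem_Icc] at this ⊢
      omega
    have top {ρ : Multiset ℕ} (hρ : ∀ q ∈ ρ, q ∈ Set.Icc 1 (B + 1)) :
        ((ρ.filter (· ≠ B + 1)).map (·.descFactorial (B + 1))).sum = 0 :=
      Multiset.sum_eq_zero fun k hk => by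
        obtain ⟨q, hq, rfl⟩ := Multiset.mem_map.mp hk
        exact Nat.descFactorial_of_lt (Nat.lt_succ_of_le (low hρ q hq).2)
    have hcount : μ.count (B + 1) = ν.count (B + 1) := by
      have := h (B + 1) ⟨by omega, le_rfl⟩
      rw [sum_split μ, sum_split ν, top hμ, top hν, Nat.descFactorial_self] at this
      simpa [(B + 1).factorial_ne_zero] using this
    have hrest : μ.filter (· ≠ B + 1) = ν.filter (· ≠ B + 1) :=
      Multiset.eq_of_sum_map_descFactorial_eq (low hμ) (low hν) fun m hm => by
        have := h m ⟨hm.1, hm.2.trans B.le_succ⟩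
        rwa [sum_split μ, sum_split ν, hcount, Nat.add_left_cancel_iff] at this
    rw [split μ, split ν, hcount, hrest]

theorem exists_equiv_apply_eq_of_card_fiber {α β γ : Type*} [Fintype α] [Fintype β]
    [DecidableEq γ] {f : α → γ} {g : β → γ}
    (h : ∀ c, Fintype.card {a // f a = c} = Fintype.card {b // g b = c}) :
    ∃ e : α ≃ β, ∀ a, g (e a) = f a :=
  ⟨Equiv.ofFiberEquiv fun c => Fintype.equivOfCardEq (h c), Equiv.ofFiberEquiv_map _⟩

section RangeFactorization

variable {α γ : Type*} [Fintype α] [DecidableEq γ] (f : α → γ)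

theorem card_rangeFactorization_fiber (c : Set.range f) :
    Fintype.card {a // Set.rangeFactorization f a = c} = #{a | f a = c} := by
  simp only [Fintype.card_subtype, Subtype.ext_iff, Set.rangeFactorization_coe]

theorem card_filter_card_fiber_eq_mul (k : ℕ) :
    #{a | #{a' | f a' = f a} = k} =
      k * Fintype.card {c : Set.range f // #{a | f a = c} = k} := by
  rw [Fintype.card_subtype, card_eq_sum_card_fiberwise (f := Set.rangeFactorization f)
    (t := {c | #{a | f a = c.1} = k}) fun a ha => by
      simp only [coe_filter, mem_univ, true_and, Set.mem_ofPred_eq] at ha ⊢; exact ha, mul_comm,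
    ← smul_eq_mul, ← sum_const]
  refine sum_congr rfl fun c hc => ?_
  rw [mem_filter] at hc
  rw [filter_filter]
  trans #{a | Set.rangeFactorization f a = c}
  · congr 1
    ext a
    simp only [mem_filter, mem_univ, true_and, and_iff_right_iff_imp]
    rintro rfl
    exact hc.2
  · rw [← Fintype.card_subtype, card_rangeFactorization_fiber]
    exact hc.2

theorem card_fiber_ne_zero (c : Set.range f) : #{a | f a = c} ≠ 0 := by
  obtain ⟨_, a, rfl⟩ := c
  exact (card_pos.mpr ⟨a, by simp⟩).ne'

end RangeFactorization

theorem exists_equiv_iff_of_fiber_card {α β γ δ : Type*} [Fintype α] [Fintype β]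
    [DecidableEq γ] [DecidableEq δ] (f : α → γ) (g : β → δ)
    (h : univ.val.map (fun a => #{a' | f a' = f a}) =
      univ.val.map (fun b => #{b' | g b' = g b})) :
    ∃ e : α ≃ β, ∀ a a', g (e a) = g (e a') ↔ f a = f a' := by
  -- match the fibres of equal size, then the points of matched fibres
  set sf : Set.range f → ℕ := fun c => #{a | f a = c}
  set sg : Set.range g → ℕ := fun d => #{b | g b = d}
  have hclasses (k : ℕ) : Fintype.card {c // sf c = k} = Fintype.card {d // sg d = k} := by
    rcases k.eq_zero_or_pos with rfl | hk
    · rw [Fintype.card_eq_zero_iff.mpr ⟨fun c => card_fiber_ne_zero f c.1 c.2⟩,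
        Fintype.card_eq_zero_iff.mpr ⟨fun d => card_fiber_ne_zero g d.1 d.2⟩]
    · have hk' := congrArg (Multiset.count k) h
      simp only [Multiset.count_map, eq_comm (a := k)] at hk'
      change #{a | _} = #{b | _} at hk'
      rw [card_filter_card_fiber_eq_mul, card_filter_card_fiber_eq_mul] at hk'
      exact Nat.eq_of_mul_eq_mul_left hk hk'
  obtain ⟨eQ, heQ⟩ := exists_equiv_apply_eq_of_card_fiber hclasses
  obtain ⟨e, he⟩ := exists_equiv_apply_eq_of_card_fiber
    (f := eQ ∘ Set.rangeFactorization f) (g := Set.rangeFactorization g) fun d => by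
      calc Fintype.card {a // eQ (Set.rangeFactorization f a) = d}
          = Fintype.card {a // Set.rangeFactorization f a = eQ.symm d} :=
            Fintype.card_congr (Equiv.subtypeEquivRight fun a => eQ.eq_symm_apply.symm)
        _ = sg d := by
          rw [card_rangeFactorization_fiber]
          exact (heQ _).symm.trans (by rw [eQ.apply_symm_apply])
        _ = _ := (card_rangeFactorization_fiber g d).symm
  refine ⟨e, fun a a' => ?_⟩
  rw [← Set.rangeFactorization_coe g, ← Set.rangeFactorization_coe g, ← Subtype.ext_iff, he,
    he, Function.comp_apply, Function.comp_apply, eQ.apply_eq_iff_eq, Subtype.ext_iff]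
  rfl

theorem MulAction.card_filter_smul_eq {G X : Type*} [Group G] [Fintype G] [MulAction G X]
    [Fintype X] [DecidableEq X] [MulAction.IsPretransitive G X] (p : X → Prop) [DecidablePred p]
    (x : X) : #{g : G | p (g • x)} = #{g : G | g • x = x} * #{y | p y} := by
  rw [card_eq_sum_card_fiberwise (f := (· • x)) (t := {y | p y}) fun g hg => by simpa using hg,
    mul_comm, ← smul_eq_mul, ← sum_const]
  refine sum_congr rfl fun y hy => ?_
  obtain ⟨g₀, rfl⟩ := MulAction.exists_smul_eq G x y
  rw [filter_filter]
  refine card_equiv (Equiv.mulLeft g₀⁻¹) fun g => ?_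
  simp only [mem_filter, mem_univ, true_and, Equiv.coe_mulLeft, mul_smul, inv_smul_eq_iff]
  exact ⟨fun h => h.2, fun h => ⟨h ▸ (mem_filter.mp hy).2, h⟩⟩

namespace Matroid

variable {α : Type*} {M : Matroid α} {I X : Set α}

theorem Indep.encard_le_of_subset_closure (hI : M.Indep I) (h : I ⊆ M.closure X) :
    I.encard ≤ X.encard :=
  (hI.encard_le_eRk_of_subset h).trans ((M.eRk_closure_eq X).trans_le (M.eRk_le_encard X))

end Matroid

namespace PaperPOAM

open Matroid

section RankTwo

variable {α β : Type*} {M : Matroid α} {N : Matroid β} {r : ℕ}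

theorem RankEq.isBase_of_indep (hr : RankEq M r) (hr0 : r ≠ 0) {I : Set α} (hI : M.Indep I)
    (hcard : I.ncard = r) : M.IsBase I := by
  obtain ⟨B, hB, hIB⟩ := hI.exists_isBase_superset
  have hBr := hr B hB
  have hBfin : B.Finite := Set.finite_of_ncard_ne_zero (hBr ▸ hr0)
  rwa [Set.eq_of_subset_of_ncard_le hIB (by rw [hBr, hcard]) hBfin]

theorem RankEq.isBase_pair_iff (hr : RankEq M 2) {a b : α} :
    M.IsBase {a, b} ↔ M.IsNonloop a ∧ b ∈ M.E \ M.closure {a} := by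
  constructor
  · intro hB
    have hab : a ≠ b := by
      rintro rfl
      simpa using hr _ hB
    have ha : M.IsNonloop a := hB.indep.isNonloop_of_mem (Set.mem_insert a {b})
    refine ⟨ha, (ha.indep.insert_indep_iff_of_notMem (Ne.symm hab)).mp ?_⟩
    rw [Set.pair_comm]
    exact hB.indep
  · rintro ⟨ha, hb⟩
    have hab : a ≠ b := fun h => hb.2 (h ▸ M.mem_closure_of_mem' rfl ha.mem_ground)
    refine hr.isBase_of_indep two_ne_zero ?_ (Set.ncard_pair hab)
    rw [Set.pair_comm]
    exact (ha.indep.insert_indep_iff_of_notMem (Ne.symm hab)).mpr hb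

theorem RankEq.exists_notMem_closure (hr : RankEq M 2) (a : α) :
    ∃ b ∈ M.E, b ∉ M.closure {a} := by
  obtain ⟨B, hB⟩ := M.exists_isBase
  obtain ⟨c, d, hcd, rfl⟩ := Set.ncard_eq_two.mp (hr B hB)
  by_contra! h
  have := hB.indep.encard_le_of_subset_closure fun x hx => h x (hB.subset_ground hx)
  rw [Set.encard_pair hcd, Set.encard_singleton] at this
  exact absurd this (by norm_num)

theorem RankEq.isBase_iff_image_of_isBase_pair_iff (hM : RankEq M 2) (hN : RankEq N 2)
    (π : α ≃ β) (h : ∀ a b, M.IsBase {a, b} ↔ N.IsBase {π a, π b}) (B : Set α) :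
    M.IsBase B ↔ N.IsBase (π '' B) := by
  constructor
  · intro hB
    obtain ⟨a, b, -, rfl⟩ := Set.ncard_eq_two.mp (hM B hB)
    rwa [Set.image_pair, ← h]
  · intro hB
    obtain ⟨c, d, -, hcd⟩ := Set.ncard_eq_two.mp (hN _ hB)
    rw [← π.symm_image_image B, hcd, Set.image_pair, h, π.apply_symm_apply, π.apply_symm_apply,
      ← hcd]
    exact hB

theorem notMem_closure_singleton_iff (hE : M.E = Set.univ) {a b : α} :
    b ∉ M.closure {a} ↔ M.IsNonloop b ∧ M.closure {b} ≠ M.closure {a} := by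
  refine ⟨fun hb => ⟨?_, fun h => hb ?_⟩, fun hb h => hb.2 (hb.1.closure_eq_of_mem_closure h)⟩
  · by_contra hloop
    exact hb ((isLoop_of_not_isNonloop (hE ▸ Set.mem_univ b) hloop).mem_closure _)
  · exact h ▸ M.mem_closure_of_mem' rfl (hE ▸ Set.mem_univ b)

end RankTwo

open scoped Classical

section Polytope

variable {α : Type*} {M : Matroid α}

noncomputable def baseHull (M : Matroid α) : Set (α → ℝ) :=
  convexHull ℝ {x | ∃ B, M.IsBase B ∧ x = B.indicator 1}

theorem sum_closure_le_card_of_mem_baseHull [Fintype α] (X : Finset α) {x : α → ℝ}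
    (hx : x ∈ baseHull M) : ∑ a with a ∈ M.closure X, x a ≤ #X := by
  refine convexHull_min ?_
    (convex_halfSpace_le (f := fun x : α → ℝ => ∑ a with a ∈ M.closure X, x a) ?_ _) hx
  · rintro _ ⟨B, hB, rfl⟩
    simp only [Set.mem_ofPred_eq, Set.indicator_apply, Pi.one_apply, sum_boole, filter_filter]
    set T : Finset α := {a | a ∈ M.closure X ∧ a ∈ B}
    have hT : (T : Set α).encard ≤ (X : Set α).encard :=
      (hB.indep.subset fun a ha => (mem_filter.mp ha).2.2).encard_le_of_subset_closure
        fun a ha => (mem_filter.mp ha).2.1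
    rw [Set.encard_coe_eq_coe_finsetCard, Set.encard_coe_eq_coe_finsetCard] at hT
    exact_mod_cast hT
  · exact ⟨fun x y => sum_add_distrib, fun c x => (mul_sum _ _ _).symm⟩

variable {m : ℕ}

noncomputable def testPoint (v : Fin (m + 1) ↪ α) : α → ℝ :=
  Pi.single (v 0) 1 + (m : ℝ)⁻¹ • ∑ j : Fin m, Pi.single (v j.succ) 1

theorem testPoint_apply_zero (v : Fin (m + 1) ↪ α) : testPoint v (v 0) = 1 := by
  simp [testPoint, v.injective.eq_iff, Fin.succ_ne_zero]

theorem testPoint_apply_succ (v : Fin (m + 1) ↪ α) (j : Fin m) :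
    testPoint v (v j.succ) = (m : ℝ)⁻¹ := by
  simp [testPoint, Pi.single_apply, v.injective.eq_iff, Fin.succ_ne_zero]

theorem testPoint_nonneg (v : Fin (m + 1) ↪ α) (a : α) : 0 ≤ testPoint v a := by
  simp only [testPoint, Pi.add_apply, Pi.smul_apply, Finset.sum_apply, Pi.single_apply,
    smul_eq_mul]
  positivity

theorem testPoint_comp_perm (v : Fin (m + 1) ↪ α) (σ : Equiv.Perm α) :
    (fun a => testPoint v (σ a)) = testPoint (σ⁻¹ • v) := by
  funext a
  simp [testPoint, Pi.single_apply, Finset.sum_apply, Function.Embedding.smul_apply,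
    Equiv.eq_symm_apply]

theorem testPoint_eq_sum (hm : m ≠ 0) (v : Fin (m + 1) ↪ α) :
    testPoint v = ∑ j : Fin m, (m : ℝ)⁻¹ • ({v 0, v j.succ} : Set α).indicator 1 := by
  funext a
  have hne (j : Fin m) : v 0 ≠ v j.succ := v.injective.ne (Fin.succ_ne_zero j).symm
  simp only [testPoint, Pi.add_apply, Pi.smul_apply, Finset.sum_apply, smul_eq_mul,
    Set.indicator_apply, Set.mem_insert_iff, Set.mem_singleton_iff, Pi.one_apply, Pi.single_apply]
  by_cases ha : a = v 0
  · subst ha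
    simp [hne, hm]
  · simp only [ha, false_or, if_false, zero_add, mul_sum, mul_ite, mul_one, mul_zero]

theorem testPoint_mem_baseHull_iff [Fintype α] (hE : M.E = Set.univ) (hr : RankEq M 2)
    (hm : m ≠ 0) (v : Fin (m + 1) ↪ α) :
    testPoint v ∈ baseHull M ↔ M.IsNonloop (v 0) ∧ ∀ j : Fin m, v j.succ ∉ M.closure {v 0} := by
  constructor
  · intro hx
    have hv0 : M.IsNonloop (v 0) := by
      by_contra hloop
      have hmem : v 0 ∈ M.closure (∅ : Finset α) := by
        rw [coe_empty, Matroid.closure_empty]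
        exact isLoop_of_not_isNonloop (hE ▸ Set.mem_univ _) hloop
      have hle := sum_closure_le_card_of_mem_baseHull ∅ hx
      have := single_le_sum (fun a _ => testPoint_nonneg v a) (mem_filter.mpr ⟨mem_univ _, hmem⟩)
      rw [testPoint_apply_zero] at this
      simp only [card_empty, CharP.cast_eq_zero] at hle
      linarith
    refine ⟨hv0, fun j hj => ?_⟩
    have hsub :
        {v 0, v j.succ} ⊆ ({a | a ∈ M.closure (({v 0} : Finset α) : Set α)} : Finset α) := by
      intro a ha
      rw [mem_filter, coe_singleton]
      rcases mem_insert.mp ha with rfl | ha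
      · exact ⟨mem_univ _, M.mem_closure_of_mem' rfl (hE ▸ Set.mem_univ _)⟩
      · exact ⟨mem_univ _, mem_singleton.mp ha ▸ hj⟩
    have hle := sum_closure_le_card_of_mem_baseHull {v 0} hx
    have := sum_le_sum_of_subset_of_nonneg hsub fun a _ _ => testPoint_nonneg v a
    rw [sum_pair (v.injective.ne (Fin.succ_ne_zero j).symm), testPoint_apply_zero,
      testPoint_apply_succ] at this
    have : 0 < (m : ℝ)⁻¹ := by positivity
    simp only [card_singleton, Nat.cast_one] at hle
    linarith
  · rintro ⟨hv0, hv⟩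
    rw [testPoint_eq_sum hm]
    refine (convex_convexHull ℝ _).sum_mem (fun _ _ => by positivity) (by simp [hm])
      fun j _ => subset_convexHull ℝ _ ⟨_, hr.isBase_pair_iff.mpr ⟨hv0, ?_⟩, rfl⟩
    rw [hE]
    exact ⟨Set.mem_univ _, hv j⟩

end Polytope

section Counting

variable {α : Type*} [Fintype α] {M : Matroid α} {m : ℕ}

noncomputable def numNonparallel (M : Matroid α) (a : α) : ℕ := #{b | b ∉ M.closure {a}}

theorem card_embedding_nonloop_notMem_closure (m : ℕ) :
    Fintype.card {v : Fin (m + 1) ↪ α //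
      M.IsNonloop (v 0) ∧ ∀ j : Fin m, v j.succ ∉ M.closure {v 0}} =
      ∑ a : {a // M.IsNonloop a}, (numNonparallel M a).descFactorial m := by
  let e : {v : Fin (m + 1) ↪ α // M.IsNonloop (v 0) ∧ ∀ j : Fin m, v j.succ ∉ M.closure {v 0}} ≃
      Σ a : {a // M.IsNonloop a}, (Fin m ↪ {b // b ∉ M.closure {a.1}}) :=
    { toFun := fun v => ⟨⟨v.1 0, v.2.1⟩, ⟨fun j => ⟨v.1 j.succ, v.2.2 j⟩,
        fun i j h => Fin.succ_injective _ (v.1.injective (congrArg Subtype.val h))⟩⟩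
      invFun := fun p => ⟨⟨Fin.cons p.1.1 fun j => (p.2 j).1, Fin.cons_injective_iff.mpr
        ⟨fun ⟨j, hj⟩ => (p.2 j).2 (by
          rw [show ((p.2 j) : α) = p.1 from hj]
          exact M.mem_closure_of_mem' rfl p.1.2.mem_ground),
          Subtype.val_injective.comp (p.2).injective⟩⟩, p.1.2, fun j => (p.2 j).2⟩
      left_inv := fun v => by
        ext i
        exact Fin.cases rfl (fun j => rfl) i
      right_inv := fun p => rfl }
  rw [Fintype.card_congr e, Fintype.card_sigma]
  simp [Fintype.card_embedding_eq, numNonparallel, Fintype.card_subtype]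

theorem card_perm_testPoint_mem [DecidableEq α] (hE : M.E = Set.univ) (hr : RankEq M 2)
    (hm : m ≠ 0) (v : Fin (m + 1) ↪ α) :
    #{σ : Equiv.Perm α | (fun a => testPoint v (σ a)) ∈ baseHull M} =
      #{σ : Equiv.Perm α | σ • v = v} *
        ∑ a : {a // M.IsNonloop a}, (numNonparallel M a).descFactorial m := by
  have := Equiv.Perm.isMultiplyPretransitive α (m + 1)
  rw [← card_embedding_nonloop_notMem_closure, Fintype.card_subtype,
    ← MulAction.card_filter_smul_eq]
  refine card_equiv (Equiv.inv _) fun σ => ?_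
  simp only [mem_filter, mem_univ, true_and, Equiv.inv_apply, testPoint_comp_perm]
  exact testPoint_mem_baseHull_iff hE hr hm _

end Counting

section Isomorphism

variable {α : Type*} [Fintype α] {M N : Matroid α}

noncomputable def nonparallelProfile (M : Matroid α) : Multiset ℕ :=
  (univ : Finset {a // M.IsNonloop a}).val.map fun a => numNonparallel M a.1

theorem numNonparallel_mem_Icc (hr : RankEq M 2) {a : α} (ha : M.IsNonloop a) :
    numNonparallel M a ∈ Set.Icc 1 (Fintype.card α - 1) := by
  obtain ⟨b, -, hb⟩ := hr.exists_notMem_closure a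
  have hsub : ({b | b ∉ M.closure {a}} : Finset α) ⊆ univ.erase a := fun x hx =>
    mem_erase.mpr ⟨fun h => (mem_filter.mp hx).2 (by
      rw [h]
      exact M.mem_closure_of_mem' rfl ha.mem_ground), mem_univ x⟩
  refine ⟨card_pos.mpr ⟨b, mem_filter.mpr ⟨mem_univ b, hb⟩⟩, ?_⟩
  exact (card_le_card hsub).trans (by simp [card_erase_of_mem])

theorem nonparallelProfile_eq_of_card_perm_eq [DecidableEq α] (hME : M.E = Set.univ)
    (hNE : N.E = Set.univ) (hM : RankEq M 2) (hN : RankEq N 2)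
    (h : ∀ x : α → ℝ, #{σ : Equiv.Perm α | (fun a => x (σ a)) ∈ baseHull M} =
      #{σ : Equiv.Perm α | (fun a => x (σ a)) ∈ baseHull N}) :
    nonparallelProfile M = nonparallelProfile N := by
  have bounds {M : Matroid α} (hr : RankEq M 2) :
      ∀ q ∈ nonparallelProfile M, q ∈ Set.Icc 1 (Fintype.card α - 1) := fun q hq => by
    obtain ⟨⟨a, ha⟩, -, rfl⟩ := Multiset.mem_map.mp hq
    exact numNonparallel_mem_Icc hr ha
  refine Multiset.eq_of_sum_map_descFactorial_eq (bounds hM) (bounds hN) fun m ⟨hm1, hm⟩ => ?_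
  obtain ⟨v⟩ := Function.Embedding.nonempty_of_card_le (α := Fin (m + 1)) (β := α)
    (by rw [Fintype.card_fin]; omega)
  have hm0 : m ≠ 0 := Nat.one_le_iff_ne_zero.mp hm1
  have := h (testPoint v)
  rw [card_perm_testPoint_mem hME hM hm0, card_perm_testPoint_mem hNE hN hm0] at this
  simpa [nonparallelProfile, Multiset.map_map, sum_map_val] using
    Nat.eq_of_mul_eq_mul_left (card_pos.mpr ⟨1, by simp⟩) this

theorem numNonparallel_add_card_parallel (hE : M.E = Set.univ) (a : α) :
    numNonparallel M a + #{b : {b // M.IsNonloop b} | M.closure {b.1} = M.closure {a}} =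
      Fintype.card {b // M.IsNonloop b} := by
  have hnumNonparallel :
      numNonparallel M a = #{b : {b // M.IsNonloop b} | M.closure {b.1} ≠ M.closure {a}} := by
    refine (card_bij (fun (b : {b // M.IsNonloop b}) _ => b.1) (fun b hb => ?_)
      (fun b _ c _ => Subtype.ext) fun b hb => ?_).symm
    · simpa [notMem_closure_singleton_iff hE, b.2] using hb
    · rw [mem_filter, notMem_closure_singleton_iff hE] at hb
      exact ⟨⟨b, hb.2.1⟩, by simpa using hb.2.2, rfl⟩
  rw [hnumNonparallel, add_comm, card_filter_add_card_filter_not, card_univ]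

theorem map_card_parallel_eq (hE : M.E = Set.univ) :
    (univ : Finset {a // M.IsNonloop a}).val.map
      (fun a => #{b : {b // M.IsNonloop b} | M.closure {b.1} = M.closure {a.1}}) =
    (nonparallelProfile M).map (Multiset.card (nonparallelProfile M) - ·) := by
  rw [nonparallelProfile, Multiset.map_map, Multiset.card_map, card_val, card_univ]
  refine Multiset.map_congr rfl fun a _ => ?_
  have := numNonparallel_add_card_parallel hE a.1
  simp only [Function.comp_apply]
  omega

theorem exists_perm_isBase_iff_of_nonparallelProfile_eq (hME : M.E = Set.univ)
    (hNE : N.E = Set.univ) (hM : RankEq M 2) (hN : RankEq N 2)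
    (h : nonparallelProfile M = nonparallelProfile N) :
    ∃ π : Equiv.Perm α, ∀ B, M.IsBase B ↔ N.IsBase (π '' B) := by
  obtain ⟨e, he⟩ := exists_equiv_iff_of_fiber_card
    (fun a : {a // M.IsNonloop a} => M.closure {a.1})
    (fun b : {b // N.IsNonloop b} => N.closure {b.1})
    (by rw [map_card_parallel_eq hME, map_card_parallel_eq hNE, h])
  have hnonloops : Fintype.card {a // M.IsNonloop a} = Fintype.card {a // N.IsNonloop a} := by
    simpa [nonparallelProfile] using congrArg Multiset.card h
  have hloops : Fintype.card {a // ¬ M.IsNonloop a} = Fintype.card {a // ¬ N.IsNonloop a} := by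
    rw [Fintype.card_subtype_compl, Fintype.card_subtype_compl, hnonloops]
  set π := Equiv.subtypeCongr e (Fintype.equivOfCardEq hloops)
  have hπ_nonloop {a : α} (ha : M.IsNonloop a) : π a = e ⟨a, ha⟩ := by
    simp [π, Equiv.subtypeCongr, ha]
  have hnonloop (a : α) : N.IsNonloop (π a) ↔ M.IsNonloop a := by
    by_cases ha : M.IsNonloop a
    · simpa [hπ_nonloop ha, ha] using (e ⟨a, ha⟩).2
    · simp only [π, Equiv.subtypeCongr, Equiv.trans_apply, Equiv.sumCompl_symm_apply_of_neg ha,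
        Equiv.sumCongr_apply, Sum.map_inr, Equiv.sumCompl_apply_inr, ha, iff_false]
      exact (Fintype.equivOfCardEq hloops ⟨a, ha⟩).2
  refine ⟨π, hM.isBase_iff_image_of_isBase_pair_iff hN π fun a b => ?_⟩
  simp only [hM.isBase_pair_iff, hN.isBase_pair_iff, hME, hNE, Set.mem_sdiff, Set.mem_univ,
    true_and]
  by_cases ha : M.IsNonloop a
  · rw [notMem_closure_singleton_iff hME, notMem_closure_singleton_iff hNE, hnonloop a,
      hnonloop b]
    by_cases hb : M.IsNonloop b
    · simp only [ha, hb, true_and, hπ_nonloop ha, hπ_nonloop hb, ne_eq]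
      exact not_congr (he ⟨b, hb⟩ ⟨a, ha⟩).symm
    · simp [ha, hb]
  · simp [ha, hnonloop]

end Isomorphism

section Transport

variable {n : ℕ} {M N : Matroid ℕ}

theorem range_val_add_one : Set.range (fun i : Fin n => (i : ℕ) + 1) = Set.Icc 1 n := by
  ext k
  simp only [Set.mem_range, Set.mem_Icc]
  constructor
  · rintro ⟨i, rfl⟩
    omega
  · intro hk
    exact ⟨⟨k - 1, by omega⟩, by simp only; omega⟩

theorem val_add_one_injective : Function.Injective (fun i : Fin n => (i : ℕ) + 1) :=
  fun i j h => Fin.ext (by simpa using h)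

/-- The element `i : Fin n` stands for `i + 1`, as in `indVec`. -/
def finComap (n : ℕ) (M : Matroid ℕ) : Matroid (Fin n) := M.comap fun i => (i : ℕ) + 1

theorem finComap_ground (hME : M.E = Set.Icc 1 n) : (finComap n M).E = Set.univ := by
  rw [finComap, comap_ground_eq, hME, ← range_val_add_one, Set.preimage_range]

theorem finComap_isBase_iff (hME : M.E = Set.Icc 1 n) {B : Set (Fin n)} :
    (finComap n M).IsBase B ↔ M.IsBase ((fun i : Fin n => (i : ℕ) + 1) '' B) := by
  have hE : M.E = Set.range fun i : Fin n => (i : ℕ) + 1 := hME.trans range_val_add_one.symm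
  rw [finComap, comap_isBase_iff, Set.image_preimage_eq_of_subset hE.le, isBasis_ground_iff]
  simp [val_add_one_injective.injOn, hE]

theorem rankEq_finComap (hME : M.E = Set.Icc 1 n) {r : ℕ} (hr : RankEq M r) :
    RankEq (finComap n M) r := fun B hB => by
  rw [← hr _ ((finComap_isBase_iff hME).mp hB),
    Set.ncard_image_of_injective B val_add_one_injective]

theorem indVec_eq_indicator (B : Set ℕ) :
    indVec n B = ((fun i : Fin n => (i : ℕ) + 1) ⁻¹' B).indicator 1 := by
  funext i
  simp [indVec, Set.indicator_apply]

theorem basePolytope_eq_baseHull (hME : M.E = Set.Icc 1 n) :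
    basePolytope n M = baseHull (finComap n M) := by
  have hE : M.E = Set.range fun i : Fin n => (i : ℕ) + 1 := hME.trans range_val_add_one.symm
  refine congrArg (convexHull ℝ) (Set.ext fun x => ⟨?_, ?_⟩)
  · rintro ⟨B, hB, rfl⟩
    refine ⟨_, (finComap_isBase_iff hME).mpr ?_, indVec_eq_indicator B⟩
    rwa [Set.image_preimage_eq_of_subset (hB.subset_ground.trans hE.le)]
  · rintro ⟨B, hB, rfl⟩
    refine ⟨_, (finComap_isBase_iff hME).mp hB, ?_⟩
    rw [indVec_eq_indicator, Set.preimage_image_eq _ val_add_one_injective]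

theorem card_perm_mem_eq_of_symInd_eq {X Y : Set (Fin n → ℝ)} (h : symInd n X = symInd n Y)
    (x : Fin n → ℝ) :
    #{σ : Equiv.Perm (Fin n) | (fun i => x (σ i)) ∈ X} =
      #{σ : Equiv.Perm (Fin n) | (fun i => x (σ i)) ∈ Y} := by
  have hx := congrFun h x
  simp only [symInd, Set.indicator_apply, Pi.one_apply, sum_boole] at hx
  exact_mod_cast mul_left_cancel₀ (by positivity) hx

theorem matroidIso_of_perm (hME : M.E = Set.Icc 1 n) (hNE : N.E = Set.Icc 1 n)
    (π : Equiv.Perm (Fin n))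
    (h : ∀ B, (finComap n M).IsBase B ↔ (finComap n N).IsBase (π '' B)) : MatroidIso M N := by
  set ι : Fin n → ℕ := fun i => (i : ℕ) + 1
  have hι (i : Fin n) : Function.extend ι (ι ∘ π) id (ι i) = ι (π i) :=
    val_add_one_injective.extend_apply _ _ _
  refine ⟨Function.extend ι (ι ∘ π) id, ?_, fun B hB => ?_⟩
  · rw [hME, hNE, ← range_val_add_one]
    refine ⟨?_, ?_, ?_⟩
    · rintro _ ⟨i, rfl⟩
      exact ⟨π i, (hι i).symm⟩
    · rintro _ ⟨i, rfl⟩ _ ⟨j, rfl⟩ hij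
      rw [hι, hι] at hij
      rw [π.injective (val_add_one_injective hij)]
    · rintro _ ⟨j, rfl⟩
      exact ⟨ι (π.symm j), ⟨_, rfl⟩, by rw [hι, π.apply_symm_apply]⟩
  · obtain ⟨B, rfl⟩ : ∃ B', ι '' B' = B :=
      Set.subset_range_iff_exists_image_eq.mp (hB.trans (hME.trans range_val_add_one.symm).le)
    rw [Set.image_image,
      show (fun i => Function.extend ι (ι ∘ π) id (ι i)) = ι ∘ π from funext hι,
      Set.image_comp, ← finComap_isBase_iff hME, ← finComap_isBase_iff hNE, h]

end Transport

/-- rank-2 matroids on `{1,…,n}` whose base polytopes have equal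
symmetrized indicator functions are isomorphic. -/
theorem statement_10 (n : ℕ) (M N : Matroid ℕ)
    (hME : M.E = Set.Icc 1 n) (hNE : N.E = Set.Icc 1 n)
    (hMrk : RankEq M 2) (hNrk : RankEq N 2)
    (h : symInd n (basePolytope n M) = symInd n (basePolytope n N)) :
    MatroidIso M N := by
  have hM := rankEq_finComap hME hMrk
  have hN := rankEq_finComap hNE hNrk
  have hcard := card_perm_mem_eq_of_symInd_eq h
  simp only [basePolytope_eq_baseHull hME, basePolytope_eq_baseHull hNE] at hcard
  have hprofile := nonparallelProfile_eq_of_card_perm_eq (finComap_ground hME)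
    (finComap_ground hNE) hM hN hcard
  obtain ⟨π, hπ⟩ := exists_perm_isBase_iff_of_nonparallelProfile_eq (finComap_ground hME)
    (finComap_ground hNE) hM hN hprofile
  exact matroidIso_of_perm hME hNE π hπ

end PaperPOAM
end

section
/- Let n ≥ 4 and let 𝔽 be a family of subsets of [n] = {1, …, n} such that every F ∈ 𝔽 satisfies 3 ≤ |F| ≤ n − 2, and such that |F ∩ F'| ≤ 1 for all distinct F, F' ∈ 𝔽. Then there exists a matroid M of rank 3 on [n] whose set of cyclic flats is exactly {∅, [n]} ∪ 𝔽, in which every F ∈ 𝔽 is a flat of rank 2. -/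
/-!
The matroid is the rank-3 paving matroid whose long lines are the members of `𝔽`: a set is
independent when it has at most three elements and does not contain three points of one
member of `𝔽`. Since two members meet in at most one point, a pair lies in at most one of them,
and adding to a pair a point off that member keeps it independent; this gives the exchange
axiom. For the same reason the closure of a pair is the member of `𝔽` through it, or the pair
itself, so a flat with at least three points is a member of `𝔽` or the whole ground set.
Circuits have at least three points, which leaves only these and `∅` as cyclic flats; conversely
three points of a member of `𝔽` form a circuit, and every point `e` lies in the fundamental
circuit of `e` with respect to a base avoiding `e`.
-/

namespace PaperPOAM

open Set

variable {α : Type*}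

theorem isCircuit_iff_isCircuit {M : Matroid α} {C : Set α} :
    IsCircuit M C ↔ M.IsCircuit C := by
  rw [Matroid.isCircuit_iff_forall_ssubset]
  refine and_congr_right fun hC => ⟨fun h I hIC => ?_, fun h D hDC => (h hDC).not_dep⟩
  exact (Matroid.not_dep_iff (hIC.subset.trans hC.subset_ground)).mp (h I hIC)

theorem rkOf_eq {M : Matroid α} {X : Set α} {k : ℕ} (hex : ∃ I ⊆ X, M.Indep I ∧ I.ncard = k)
    (hle : ∀ I ⊆ X, M.Indep I → I.ncard ≤ k) : rkOf M X = k := by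
  refine IsGreatest.csSup_eq ⟨?_, ?_⟩
  · obtain ⟨I, hIX, hI, rfl⟩ := hex
    exact ⟨I, hI, hIX, rfl⟩
  · rintro _ ⟨I, hI, hIX, rfl⟩
    exact hle I hIX hI

def PavingIndep (E : Set α) (𝔽 : Set (Set α)) (I : Set α) : Prop :=
  I ⊆ E ∧ I.ncard ≤ 3 ∧ ∀ F ∈ 𝔽, I ⊆ F → I.ncard ≤ 2

variable {E : Set α} {𝔽 : Set (Set α)} {F F' I J P S X : Set α} {x : α}

theorem eq_of_subset_of_subset_of_two_le_ncard
    (hint : ∀ F ∈ 𝔽, ∀ F' ∈ 𝔽, F ≠ F' → (F ∩ F').ncard ≤ 1) (hF : F ∈ 𝔽) (hF' : F' ∈ 𝔽)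
    (hFfin : F.Finite) (hPF : P ⊆ F) (hPF' : P ⊆ F') (hP : 2 ≤ P.ncard) : F = F' := by
  by_contra hne
  have := ncard_le_ncard (subset_inter hPF hPF') (hFfin.inter_of_left F')
  have := hint F hF F' hF' hne
  omega

namespace PavingIndep

theorem of_ncard_le_two (hIE : I ⊆ E) (hI : I.ncard ≤ 2) : PavingIndep E 𝔽 I :=
  ⟨hIE, hI.trans (by norm_num), fun _ _ _ => hI⟩

theorem subset (hE : E.Finite) (hJ : PavingIndep E 𝔽 J) (hIJ : I ⊆ J) : PavingIndep E 𝔽 I := by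
  obtain ⟨hJE, hJ3, hJF⟩ := hJ
  have hJfin := hE.subset hJE
  refine ⟨hIJ.trans hJE, (ncard_le_ncard hIJ hJfin).trans hJ3, fun F hF hIF => ?_⟩
  by_contra! h
  obtain rfl : I = J := eq_of_subset_of_ncard_le hIJ (hJ3.trans h) hJfin
  exact h.not_ge (hJF F hF hIF)

theorem insert_of_forall_notMem (hP : PavingIndep E 𝔽 P) (hP2 : P.ncard = 2) (hx : x ∈ E)
    (hxP : x ∉ P) (hxF : ∀ F ∈ 𝔽, P ⊆ F → x ∉ F) : PavingIndep E 𝔽 (insert x P) := by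
  have hcard : (insert x P).ncard = 3 := by
    rw [ncard_insert_of_notMem hxP (finite_of_ncard_pos (by omega)), hP2]
  refine ⟨insert_subset hx hP.1, hcard.le, fun F hF hxPF => ?_⟩
  exact absurd (hxPF (mem_insert x P)) (hxF F hF ((subset_insert x P).trans hxPF))

theorem insert_of_subset_of_notMem (hint : ∀ F ∈ 𝔽, ∀ F' ∈ 𝔽, F ≠ F' → (F ∩ F').ncard ≤ 1)
    (hP : PavingIndep E 𝔽 P) (hP2 : P.ncard = 2) (hF : F ∈ 𝔽) (hFfin : F.Finite) (hPF : P ⊆ F)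
    (hx : x ∈ E) (hxF : x ∉ F) : PavingIndep E 𝔽 (insert x P) :=
  hP.insert_of_forall_notMem hP2 hx (fun h => hxF (hPF h)) fun _ hF' hPF' =>
    eq_of_subset_of_subset_of_two_le_ncard hint hF hF' hFfin hPF hPF' hP2.ge ▸ hxF

theorem exists_insert_of_ncard_eq_two (hE : E.Finite) (h𝔽 : ∀ F ∈ 𝔽, F ⊆ E)
    (hint : ∀ F ∈ 𝔽, ∀ F' ∈ 𝔽, F ≠ F' → (F ∩ F').ncard ≤ 1)
    (hP : PavingIndep E 𝔽 P) (hP2 : P.ncard = 2) (hS : S ⊆ E) (hS3 : 3 ≤ S.ncard)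
    (hSF : ∀ F ∈ 𝔽, P ⊆ F → ¬ S ⊆ F) : ∃ x ∈ S, x ∉ P ∧ PavingIndep E 𝔽 (insert x P) := by
  by_cases hline : ∃ F ∈ 𝔽, P ⊆ F
  · obtain ⟨F, hF, hPF⟩ := hline
    obtain ⟨x, hxS, hxF⟩ := not_subset.mp (hSF F hF hPF)
    exact ⟨x, hxS, fun h => hxF (hPF h),
      hP.insert_of_subset_of_notMem hint hP2 hF (hE.subset (h𝔽 F hF)) hPF (hS hxS) hxF⟩
  · push Not at hline
    obtain ⟨x, hxS, hxP⟩ := exists_mem_notMem_of_ncard_lt_ncard (show P.ncard < S.ncard by omega)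
      (finite_of_ncard_pos (by omega))
    exact ⟨x, hxS, hxP,
      hP.insert_of_forall_notMem hP2 (hS hxS) hxP fun F hF hPF => absurd hPF (hline F hF)⟩

theorem exists_insert (hE : E.Finite) (h𝔽 : ∀ F ∈ 𝔽, F ⊆ E)
    (hint : ∀ F ∈ 𝔽, ∀ F' ∈ 𝔽, F ≠ F' → (F ∩ F').ncard ≤ 1)
    (hI : PavingIndep E 𝔽 I) (hJ : PavingIndep E 𝔽 J) (hlt : I.ncard < J.ncard) :
    ∃ x ∈ J, x ∉ I ∧ PavingIndep E 𝔽 (insert x I) := by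
  have hIfin := hE.subset hI.1
  obtain hI1 | hI2 : I.ncard ≤ 1 ∨ I.ncard = 2 := by have := hJ.2.1; omega
  · obtain ⟨x, hxJ, hxI⟩ := exists_mem_notMem_of_ncard_lt_ncard hlt hIfin
    exact ⟨x, hxJ, hxI, of_ncard_le_two (insert_subset (hJ.1 hxJ) hI.1)
      ((ncard_insert_le x I).trans (by omega))⟩
  · refine hI.exists_insert_of_ncard_eq_two hE h𝔽 hint hI2 hJ.1 (by omega) fun F hF _ hJF => ?_
    have := hJ.2.2 F hF hJF
    omega

theorem exists_ncard_eq_three (hE : E.Finite) (h𝔽 : ∀ F ∈ 𝔽, F ⊆ E)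
    (hint : ∀ F ∈ 𝔽, ∀ F' ∈ 𝔽, F ≠ F' → (F ∩ F').ncard ≤ 1)
    (hS : S ⊆ E) (hS3 : 3 ≤ S.ncard) (hSF : ∀ F ∈ 𝔽, ¬ S ⊆ F) :
    ∃ B ⊆ S, PavingIndep E 𝔽 B ∧ B.ncard = 3 := by
  obtain ⟨P, hPS, hP2⟩ := exists_subset_card_eq (show 2 ≤ S.ncard by omega)
  obtain ⟨x, hxS, hxP, hB⟩ := (of_ncard_le_two (hPS.trans hS) hP2.le).exists_insert_of_ncard_eq_two
    hE h𝔽 hint hP2 hS hS3 fun F hF _ => hSF F hF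
  refine ⟨insert x P, insert_subset hxS hPS, hB, ?_⟩
  rw [ncard_insert_of_notMem hxP (finite_of_ncard_pos (by omega)), hP2]

end PavingIndep

def pavingMatroid (hE : E.Finite) (h𝔽 : ∀ F ∈ 𝔽, F ⊆ E)
    (hint : ∀ F ∈ 𝔽, ∀ F' ∈ 𝔽, F ≠ F' → (F ∩ F').ncard ≤ 1) : Matroid α :=
  (IndepMatroid.ofFinite hE (PavingIndep E 𝔽) (.of_ncard_le_two (empty_subset E) (by simp))
    (fun _ _ hJ hIJ => hJ.subset hE hIJ) (fun _ _ hI hJ hlt => hI.exists_insert hE h𝔽 hint hJ hlt)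
    fun _ hI => hI.1).matroid

namespace pavingMatroid

variable (hE : E.Finite) (h𝔽 : ∀ F ∈ 𝔽, F ⊆ E)
  (hint : ∀ F ∈ 𝔽, ∀ F' ∈ 𝔽, F ≠ F' → (F ∩ F').ncard ≤ 1)

local notation "M" => pavingMatroid hE h𝔽 hint

theorem ground_eq : (M).E = E := rfl

theorem closure_eq_self_of_ncard_le_one (hIE : I ⊆ E) (hI : I.ncard ≤ 1) :
    (M).closure I = I := by
  have hInd : (M).Indep I := PavingIndep.of_ncard_le_two hIE (by omega)
  refine ((M).subset_closure I hIE).antisymm' fun x hx => ?_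
  rw [hInd.mem_closure_iff'] at hx
  exact hx.2 (PavingIndep.of_ncard_le_two (insert_subset hx.1 hIE)
    ((ncard_insert_le x I).trans (by omega)))

theorem closure_eq_of_subset (hF : F ∈ 𝔽) (hIF : I ⊆ F) (hI : I.ncard = 2) :
    (M).closure I = F := by
  have hFE := h𝔽 F hF
  have hInd : (M).Indep I := PavingIndep.of_ncard_le_two (hIF.trans hFE) hI.le
  ext x
  rw [hInd.mem_closure_iff', ground_eq]
  refine ⟨fun ⟨hxE, hx⟩ => by_contra fun hxF => hxF (hIF (hx ?_)),
    fun hxF => ⟨hFE hxF, fun hx => ?_⟩⟩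
  · exact PavingIndep.insert_of_subset_of_notMem hint hInd hI hF (hE.subset hFE) hIF hxE hxF
  · by_contra hxI
    have := hx.2.2 F hF (insert_subset hxF hIF)
    rw [ncard_insert_of_notMem hxI (finite_of_ncard_pos (by omega))] at this
    omega

theorem closure_eq_self_of_forall_not_subset (hIE : I ⊆ E) (hI : I.ncard = 2)
    (hIF : ∀ F ∈ 𝔽, ¬ I ⊆ F) : (M).closure I = I := by
  have hInd : (M).Indep I := PavingIndep.of_ncard_le_two hIE hI.le
  refine ((M).subset_closure I hIE).antisymm' fun x hx => ?_
  rw [hInd.mem_closure_iff'] at hx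
  by_contra hxI
  exact hxI (hx.2 (hInd.insert_of_forall_notMem hI hx.1 hxI fun F hF hIF' => absurd hIF' (hIF F hF)))

theorem isBase_of_ncard_eq_three (hB : PavingIndep E 𝔽 I) (hB3 : I.ncard = 3) :
    (M).IsBase I := by
  refine Matroid.Indep.isBase_of_forall_insert hB fun x hx hind => ?_
  have := hind.2.1
  rw [ncard_insert_of_notMem hx.2 (finite_of_ncard_pos (by omega))] at this
  omega

theorem rankEq_three (hE3 : 3 ≤ E.ncard) (h𝔽E : ∀ F ∈ 𝔽, F.ncard < E.ncard) : RankEq M 3 := by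
  obtain ⟨B₀, -, hB₀, hB₀3⟩ := PavingIndep.exists_ncard_eq_three hE h𝔽 hint subset_rfl hE3
    fun F hF hEF => (h𝔽E F hF).not_ge (ncard_le_ncard hEF (hE.subset (h𝔽 F hF)))
  have hB₀base := isBase_of_ncard_eq_three hE h𝔽 hint hB₀ hB₀3
  exact fun B hB => (hB.ncard_eq_ncard_of_isBase hB₀base).trans hB₀3

theorem isFlat_of_mem (hF : F ∈ 𝔽) (hF2 : 2 ≤ F.ncard) : (M).IsFlat F := by
  obtain ⟨P, hPF, hP2⟩ := exists_subset_card_eq hF2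
  exact closure_eq_of_subset hE h𝔽 hint hF hPF hP2 ▸ Matroid.isFlat_closure P

theorem rkOf_eq_two (hF : F ∈ 𝔽) (hF2 : 2 ≤ F.ncard) : rkOf M F = 2 := by
  refine rkOf_eq ?_ fun I hIF hI => hI.2.2 F hF hIF
  obtain ⟨P, hPF, hP2⟩ := exists_subset_card_eq hF2
  exact ⟨P, hPF, PavingIndep.of_ncard_le_two (hPF.trans (h𝔽 F hF)) hP2.le, hP2⟩

theorem eq_ground_or_mem_of_isFlat (hX : (M).IsFlat X) (hX3 : 3 ≤ X.ncard) : X = E ∨ X ∈ 𝔽 := by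
  obtain ⟨I, hI⟩ := (M).exists_isBasis X hX.subset_ground
  have hIX : (M).closure I = X := hI.closure_eq_closure.trans hX.closure
  have hInd : PavingIndep E 𝔽 I := hI.indep
  obtain hI1 | hI2 | hI3 : I.ncard ≤ 1 ∨ I.ncard = 2 ∨ I.ncard = 3 := by
    have := hInd.2.1; omega
  · rw [closure_eq_self_of_ncard_le_one hE h𝔽 hint hInd.1 hI1] at hIX
    subst hIX
    omega
  · by_cases hline : ∃ F ∈ 𝔽, I ⊆ F
    · obtain ⟨F, hF, hIF⟩ := hline
      rw [closure_eq_of_subset hE h𝔽 hint hF hIF hI2] at hIX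
      exact .inr (hIX ▸ hF)
    · push Not at hline
      rw [closure_eq_self_of_forall_not_subset hE h𝔽 hint hInd.1 hI2 hline] at hIX
      subst hIX
      omega
  · exact .inl (hIX.symm.trans (isBase_of_ncard_eq_three hE h𝔽 hint hInd hI3).closure_eq)

theorem isCyclicFlat_empty : IsCyclicFlat M ∅ :=
  ⟨closure_eq_self_of_ncard_le_one hE h𝔽 hint (empty_subset E) (by simp) ▸
    Matroid.isFlat_closure ∅, fun _ he => absurd he (notMem_empty _)⟩

theorem isCyclicFlat_ground (hE4 : 4 ≤ E.ncard) (h𝔽E : ∀ F ∈ 𝔽, F.ncard ≤ E.ncard - 2) :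
    IsCyclicFlat M E := by
  refine ⟨(M).ground_isFlat, fun e he => ?_⟩
  have hEe : (E \ {e}).ncard = E.ncard - 1 := ncard_sdiff_singleton_of_mem he
  obtain ⟨B, hBE, hB, hB3⟩ := PavingIndep.exists_ncard_eq_three hE h𝔽 hint sdiff_subset
    (show 3 ≤ (E \ {e}).ncard by omega) fun F hF hEF => by
      have := ncard_le_ncard hEF (hE.subset (h𝔽 F hF))
      have := h𝔽E F hF
      omega
  have heB : e ∉ B := fun h => (hBE h).2 rfl
  have hecl : e ∈ (M).closure B := (isBase_of_ncard_eq_three hE h𝔽 hint hB hB3).closure_eq ▸ he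
  refine ⟨(M).fundCircuit e B,
    isCircuit_iff_isCircuit.mpr (Matroid.Indep.fundCircuit_isCircuit hB hecl heB), ?_,
    (M).mem_fundCircuit e B⟩
  exact ((M).fundCircuit_subset_insert e B).trans (insert_subset he (hBE.trans sdiff_subset))

theorem isCyclicFlat_of_mem (hF : F ∈ 𝔽) (hF3 : 3 ≤ F.ncard) : IsCyclicFlat M F := by
  refine ⟨isFlat_of_mem hE h𝔽 hint hF (by omega), fun e he => ?_⟩
  obtain ⟨C, heC, hCF, hC3⟩ := exists_subsuperset_card_eq (singleton_subset_iff.mpr he)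
    (by simp) hF3
  refine ⟨C, isCircuit_iff_isCircuit.mpr ?_, hCF, heC rfl⟩
  refine Matroid.isCircuit_iff_forall_ssubset.mpr ⟨⟨fun hC => ?_, hCF.trans (h𝔽 F hF)⟩,
    fun D hDC => ?_⟩
  · have := hC.2.2 F hF hCF
    omega
  · have := ncard_lt_ncard hDC (finite_of_ncard_pos (by omega))
    exact PavingIndep.of_ncard_le_two (hDC.subset.trans (hCF.trans (h𝔽 F hF))) (by omega)

theorem isCyclicFlat_iff (hE4 : 4 ≤ E.ncard)
    (h𝔽E : ∀ F ∈ 𝔽, 3 ≤ F.ncard ∧ F.ncard ≤ E.ncard - 2) :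
    IsCyclicFlat M X ↔ X = ∅ ∨ X = E ∨ X ∈ 𝔽 := by
  refine ⟨fun ⟨hX, hXC⟩ => ?_, ?_⟩
  · obtain rfl | ⟨e, he⟩ := X.eq_empty_or_nonempty
    · exact .inl rfl
    obtain ⟨C, hC, hCX, -⟩ := hXC e he
    have hC3 : 3 ≤ C.ncard := by
      by_contra! h
      exact hC.1.not_indep (PavingIndep.of_ncard_le_two hC.1.subset_ground (by omega))
    exact .inr (eq_ground_or_mem_of_isFlat hE h𝔽 hint hX
      (hC3.trans (ncard_le_ncard hCX (hE.subset hX.subset_ground))))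
  · rintro (rfl | rfl | hX)
    · exact isCyclicFlat_empty hE h𝔽 hint
    · exact isCyclicFlat_ground hE h𝔽 hint hE4 fun F hF => (h𝔽E F hF).2
    · exact isCyclicFlat_of_mem hE h𝔽 hint hX (h𝔽E X hX).1

end pavingMatroid

/-- given `n ≥ 4` and a family `𝔽` of subsets of `{1,…,n}` with
`3 ≤ |F| ≤ n−2` for all `F ∈ 𝔽` and `|F ∩ F'| ≤ 1` for distinct members, there is a
rank-3 matroid on `{1,…,n}` whose cyclic flats are exactly `{∅, [n]} ∪ 𝔽`, each
`F ∈ 𝔽` being a flat of rank 2. -/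
theorem statement_12 (n : ℕ) (hn : 4 ≤ n) (𝔽 : Set (Set ℕ))
    (hsub : ∀ F ∈ 𝔽, F ⊆ Set.Icc 1 n)
    (hcard : ∀ F ∈ 𝔽, 3 ≤ F.ncard ∧ F.ncard ≤ n - 2)
    (hint : ∀ F ∈ 𝔽, ∀ F' ∈ 𝔽, F ≠ F' → (F ∩ F').ncard ≤ 1) :
    ∃ M : Matroid ℕ, M.E = Set.Icc 1 n ∧ RankEq M 3 ∧
      {F | IsCyclicFlat M F} = insert ∅ (insert (Set.Icc 1 n) 𝔽) ∧
      ∀ F ∈ 𝔽, M.IsFlat F ∧ rkOf M F = 2 := by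
  have hE := finite_Icc 1 n
  have hEn : (Icc 1 n).ncard = n := by
    rw [← Finset.coe_Icc, ncard_coe_finset, Nat.card_Icc]
    omega
  rw [← hEn] at hn hcard
  refine ⟨pavingMatroid hE hsub hint, rfl,
    pavingMatroid.rankEq_three hE hsub hint (by omega) fun F hF => ?_, ?_, fun F hF => ?_⟩
  · have := hcard F hF
    omega
  · ext X
    exact pavingMatroid.isCyclicFlat_iff hE hsub hint hn hcard
  · have hF2 : 2 ≤ F.ncard := by have := (hcard F hF).1; omega
    exact ⟨pavingMatroid.isFlat_of_mem hE hsub hint hF hF2,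
      pavingMatroid.rkOf_eq_two hE hsub hint hF hF2⟩

end PaperPOAM
end

section
/- Let M be a matroid of rank 2 on [n] = {1, …, n} whose cyclic flats form a chain under inclusion (any two cyclic flats of M are comparable by inclusion). Then M is isomorphic to the rank-2 Schubert matroid S(a,b) for some integers 1 ≤ a < b ≤ n. -/
open Set

section Ranking

variable {α β : Type*} [LinearOrder α] [LinearOrder β]

theorem exists_bijOn_Icc_forall_lt_iff (s : Finset α) (g : α → β) :
    ∃ f : α → ℕ, BijOn f s (Icc 1 s.card) ∧
      ∀ x ∈ s, ∀ k, g x < k ↔ f x ≤ (s.filter fun y ↦ g y < k).card := by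
  classical
  -- `f x` will be the position of `x` in `s` ordered lexicographically by `(g x, x)`.
  let key : α → β ×ₗ α := fun x ↦ toLex (g x, x)
  have key_le {x y : α} (h : key y ≤ key x) : g y ≤ g x := by
    rcases Prod.Lex.le_iff.1 h with h | h
    exacts [h.le, h.1.le]
  let below : α → Finset α := fun x ↦ s.filter fun y ↦ key y ≤ key x
  have mem_below {x : α} (hx : x ∈ s) : x ∈ below x := Finset.mem_filter.2 ⟨hx, le_rfl⟩
  have card_below_lt {x y : α} (hy : y ∈ s) (h : key x < key y) :
      (below x).card < (below y).card := by
    refine Finset.card_lt_card ⟨fun z hz ↦ ?_, fun hsub ↦ ?_⟩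
    · simp only [below, Finset.mem_filter] at hz ⊢
      exact ⟨hz.1, hz.2.trans h.le⟩
    · exact (Finset.mem_filter.1 (hsub (mem_below hy))).2.not_gt h
  have hmaps : MapsTo (fun x ↦ (below x).card) s (Icc 1 s.card) := fun x hx ↦
    ⟨Finset.card_pos.2 ⟨x, mem_below hx⟩, Finset.card_le_card (Finset.filter_subset _ _)⟩
  have hinj : InjOn (fun x ↦ (below x).card) s := by
    intro x hx y hy hxy
    by_contra hne
    have hkey : key x ≠ key y := fun h ↦ hne (congrArg (fun p ↦ (ofLex p).2) h)
    rcases hkey.lt_or_gt with h | h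
    exacts [(card_below_lt hy h).ne hxy, (card_below_lt hx h).ne' hxy]
  refine ⟨fun x ↦ (below x).card, ⟨hmaps, hinj, ?_⟩, fun x hx k ↦ ⟨fun hk ↦ ?_, fun hk ↦ ?_⟩⟩
  · rw [← Finset.coe_Icc] at hmaps ⊢
    exact Finset.surjOn_of_injOn_of_card_le _ hmaps hinj (by simp)
  · refine Finset.card_le_card fun y hy ↦ ?_
    simp only [below, Finset.mem_filter] at hy ⊢
    exact ⟨hy.1, (key_le hy.2).trans_lt hk⟩
  · by_contra hxk
    have hsub : insert x (s.filter fun y ↦ g y < k) ⊆ below x := by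
      refine Finset.insert_subset (mem_below hx) fun y hy ↦ ?_
      simp only [below, Finset.mem_filter] at hy ⊢
      exact ⟨hy.1, (Prod.Lex.lt_iff.2 (Or.inl (hy.2.trans_le (not_lt.1 hxk)))).le⟩
    have := Finset.card_le_card hsub
    rw [Finset.card_insert_of_notMem (by simp [hxk])] at this
    simp only at hk
    omega

theorem exists_bijOn_Icc_lt_iff_of_subset (s : Finset α) {L P : Set α} (hLP : L ⊆ P) :
    ∃ (f : α → ℕ) (a b : ℕ), 1 ≤ a ∧ a ≤ b ∧ BijOn f s (Icc 1 s.card) ∧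
      ∀ x ∈ s, (x ∈ L ↔ f x < a) ∧ (x ∈ P ↔ f x < b) := by
  classical
  let g : α → ℕ := fun x ↦ if x ∈ L then 0 else if x ∈ P then 1 else 2
  have hgL {x : α} : x ∈ L ↔ g x < 1 := by simp only [g]; split_ifs <;> simp [*]
  have hgP {x : α} : x ∈ P ↔ g x < 2 := by
    by_cases hL : x ∈ L
    · simp [g, hL, hLP hL]
    · simp only [g, hL, if_false]; split_ifs <;> simp [*]
  obtain ⟨f, hf, hlev⟩ := exists_bijOn_Icc_forall_lt_iff s g
  refine ⟨f, (s.filter fun y ↦ g y < 1).card + 1, (s.filter fun y ↦ g y < 2).card + 1,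
    le_add_self, Nat.succ_le_succ (Finset.card_le_card ?_), hf, fun x hx ↦ ⟨?_, ?_⟩⟩
  · exact Finset.monotone_filter_right s fun _ _ h ↦ h.trans one_lt_two
  · rw [hgL, hlev x hx, Nat.lt_succ_iff]
  · rw [hgP, hlev x hx, Nat.lt_succ_iff]

end Ranking

namespace Matroid

variable {α : Type*} {M : Matroid α} {x y : α}

theorem IsNonloop.indep_pair_iff_not_isCircuit (hx : M.IsNonloop x) (hy : M.IsNonloop y)
    (hne : x ≠ y) : M.Indep {x, y} ↔ ¬ M.IsCircuit {x, y} := by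
  rw [← hx.closure_eq_closure_iff_isCircuit_of_ne hne, hx.closure_eq_closure_iff_eq_or_dep hy]
  simp [hne]

theorem IsCircuit.isNonloop_of_pair (hne : x ≠ y) (hC : M.IsCircuit {x, y}) : M.IsNonloop x :=
  hC.isNonloop_of_mem (nontrivial_pair hne) (mem_insert x _)

theorem IsCircuit.pair_subset_closure (hne : x ≠ y) (hC : M.IsCircuit {x, y}) :
    {x, y} ⊆ M.closure {x} := by
  refine insert_subset (M.mem_closure_self x (hC.subset_ground (mem_insert x _)))
    (singleton_subset_iff.2 ?_)
  rw [((hC.isNonloop_of_pair hne).closure_eq_closure_iff_isCircuit_of_ne hne).2 hC]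
  exact M.mem_closure_self y (hC.subset_ground (mem_insert_of_mem x rfl))

end Matroid

namespace PaperPOAM

variable {α : Type*} {M : Matroid α} {B C : Set α} {e x y u v : α}

theorem isCircuit_iff_matroid_isCircuit : IsCircuit M C ↔ M.IsCircuit C :=
  minimal_iff_forall_ssubset.symm

theorem isCyclicFlat_closure_of_isCircuit_pair (hne : x ≠ y) (hC : M.IsCircuit {x, y}) :
    IsCyclicFlat M (M.closure {x}) := by
  refine ⟨M.isFlat_closure _, fun z hz ↦ ?_⟩
  simp_rw [isCircuit_iff_matroid_isCircuit]
  obtain hzl | hzn := M.isLoop_or_isNonloop z (M.mem_ground_of_mem_closure hz)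
  · exact ⟨{z}, Matroid.singleton_isCircuit.2 hzl, singleton_subset_iff.2 hz, rfl⟩
  obtain rfl | hzx := eq_or_ne z x
  · exact ⟨{z, y}, hC, hC.pair_subset_closure hne, mem_insert z _⟩
  refine ⟨{z, x}, (hzn.closure_eq_closure_iff_isCircuit_of_ne hzx).1
    (hzn.closure_eq_of_mem_closure hz), insert_subset hz ?_, mem_insert z _⟩
  exact singleton_subset_iff.2 ((hC.pair_subset_closure hne) (mem_insert x _))

theorem closure_eq_of_isCircuit_pair
    (hchain : ∀ F G, IsCyclicFlat M F → IsCyclicFlat M G → F ⊆ G ∨ G ⊆ F)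
    (hxy : x ≠ y) (huv : u ≠ v) (hC : M.IsCircuit {x, y})
    (hC' : M.IsCircuit {u, v}) : M.closure {x} = M.closure {u} := by
  have hx := hC.isNonloop_of_pair hxy
  have hu := hC'.isNonloop_of_pair huv
  rcases hchain _ _ (isCyclicFlat_closure_of_isCircuit_pair hxy hC)
    (isCyclicFlat_closure_of_isCircuit_pair huv hC') with h | h
  · exact hx.closure_eq_of_mem_closure (h (M.mem_closure_self x hx.mem_ground))
  · exact (hu.closure_eq_of_mem_closure (h (M.mem_closure_self u hu.mem_ground))).symm

theorem exists_isNonloop_forall_isCircuit_pair_subset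
    (hchain : ∀ F G, IsCyclicFlat M F → IsCyclicFlat M G → F ⊆ G ∨ G ⊆ F)
    (he : M.IsNonloop e) :
    ∃ e, M.IsNonloop e ∧ ∀ x y, x ≠ y → M.IsCircuit {x, y} → {x, y} ⊆ M.closure {e} := by
  by_cases h : ∃ u v, u ≠ v ∧ M.IsCircuit {u, v}
  · obtain ⟨u, v, huv, hC'⟩ := h
    refine ⟨u, hC'.isNonloop_of_pair huv, fun x y hxy hC ↦ ?_⟩
    rw [← closure_eq_of_isCircuit_pair hchain hxy huv hC hC']
    exact hC.pair_subset_closure hxy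
  · push Not at h
    exact ⟨e, he, fun x y hxy hC ↦ absurd hC (h x y hxy)⟩

theorem isBase_iff_indep_ncard {r : ℕ} (hr : RankEq M r) (hr0 : r ≠ 0) :
    M.IsBase B ↔ M.Indep B ∧ B.ncard = r := by
  refine ⟨fun h ↦ ⟨h.indep, hr B h⟩, fun ⟨hB, hBr⟩ ↦ ?_⟩
  obtain ⟨B', hB', hBB'⟩ := hB.exists_isBase_superset
  have hfin : B'.Finite := finite_of_ncard_ne_zero (by rw [hr B' hB']; exact hr0)
  rwa [eq_of_subset_of_ncard_le hBB' (by rw [hr B' hB', hBr]) hfin]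

theorem isBase_iff_of_rankEq_two (hr : RankEq M 2)
    (hcl : ∀ x y, x ≠ y → M.IsCircuit {x, y} → {x, y} ⊆ M.closure {e}) (B : Set α) :
    M.IsBase B ↔ ∃ x y, x ≠ y ∧ x ∈ M.E \ M.loops ∧ y ∈ M.E \ M.closure {e} ∧ B = {x, y} := by
  rw [isBase_iff_indep_ncard hr two_ne_zero]
  constructor
  · rintro ⟨hB, hB2⟩
    obtain ⟨x, y, hne, rfl⟩ := ncard_eq_two.1 hB2
    have hx := hB.isNonloop_of_mem (mem_insert x _)
    have hy := hB.isNonloop_of_mem (mem_insert_of_mem x rfl)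
    have hnot_both (hxe : x ∈ M.closure {e}) (hye : y ∈ M.closure {e}) : False :=
      (hx.indep_pair_iff_not_isCircuit hy hne).1 hB <|
        (hx.closure_eq_closure_iff_isCircuit_of_ne hne).1 <|
          (hx.closure_eq_of_mem_closure hxe).trans (hy.closure_eq_of_mem_closure hye).symm
    by_cases hye : y ∈ M.closure {e}
    · exact ⟨y, x, hne.symm, Matroid.isNonloop_iff_mem_compl_loops.1 hy,
        ⟨hx.mem_ground, fun hxe ↦ hnot_both hxe hye⟩, pair_comm x y⟩
    · exact ⟨x, y, hne, Matroid.isNonloop_iff_mem_compl_loops.1 hx, ⟨hy.mem_ground, hye⟩, rfl⟩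
  · rintro ⟨x, y, hne, hx, hy, rfl⟩
    have hx' := Matroid.isNonloop_iff_mem_compl_loops.2 hx
    have hy' : M.IsNonloop y := Matroid.isNonloop_of_notMem_closure hy.2 hy.1
    refine ⟨(hx'.indep_pair_iff_not_isCircuit hy' hne).2 fun hC ↦ ?_, ncard_pair hne⟩
    exact hy.2 (hcl x y hne hC (mem_insert_of_mem x rfl))

theorem matroidIso_map (M : Matroid α) (f : α → α) (hf : InjOn f M.E) :
    MatroidIso M (M.map f hf) := by
  refine ⟨f, by rw [Matroid.map_ground]; exact hf.bijOn_image, fun B hB ↦ ⟨fun h ↦ ?_, fun h ↦ ?_⟩⟩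
  · exact (M.map_isBase_iff f hf).2 ⟨B, h, rfl⟩
  · obtain ⟨B₀, hB₀, hBB₀⟩ := (M.map_isBase_iff f hf).1 h
    rwa [(hf.image_eq_image_iff hB hB₀.subset_ground).1 hBB₀]

theorem isSchubert2_map {n a b : ℕ} {f : α → ℕ} {L P : Set α} (hf : BijOn f M.E (Icc 1 n))
    (hab : a ≤ b) (hL : ∀ x ∈ M.E, x ∈ L ↔ f x < a) (hP : ∀ x ∈ M.E, x ∈ P ↔ f x < b)
    (hbase : ∀ B, M.IsBase B ↔ ∃ x y, x ≠ y ∧ x ∈ M.E \ L ∧ y ∈ M.E \ P ∧ B = {x, y}) :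
    IsSchubert2 n a b (M.map f hf.injOn) := by
  refine ⟨by rw [Matroid.map_ground, hf.image_eq], fun B ↦ ?_⟩
  rw [Matroid.map_isBase_iff]
  constructor
  · rintro ⟨_, hB, rfl⟩
    obtain ⟨x, y, hne, ⟨hxE, hxL⟩, ⟨hyE, hyP⟩, rfl⟩ := (hbase _).1 hB
    have hax : a ≤ f x := not_lt.1 (mt (hL x hxE).2 hxL)
    have hby : b ≤ f y := not_lt.1 (mt (hP y hyE).2 hyP)
    have hx := hf.mapsTo hxE
    have hy := hf.mapsTo hyE
    rw [image_pair]
    rcases (hf.injOn.ne hxE hyE hne).lt_or_gt with h | h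
    · exact ⟨f x, f y, h, hax, hby, hx.1, hy.2, rfl⟩
    · exact ⟨f y, f x, h, hab.trans hby, hby.trans h.le, hy.1, hx.2, pair_comm _ _⟩
  · rintro ⟨i, j, hij, hai, hbj, hi1, hjn, rfl⟩
    obtain ⟨x, hxE, rfl⟩ := hf.surjOn ⟨hi1, hij.le.trans hjn⟩
    obtain ⟨y, hyE, rfl⟩ := hf.surjOn ⟨hi1.trans hij.le, hjn⟩
    refine ⟨{x, y}, (hbase _).2 ⟨x, y, ?_, ⟨hxE, ?_⟩, ⟨hyE, ?_⟩, rfl⟩, (image_pair f x y).symm⟩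
    · rintro rfl
      exact hij.ne rfl
    · rw [hL x hxE]
      omega
    · rw [hP y hyE]
      omega

/-- a rank-2 matroid on `{1,…,n}` whose cyclic flats form a chain under
inclusion is isomorphic to a rank-2 Schubert matroid `S(a,b)` for some `1 ≤ a < b ≤ n`. -/
theorem statement_16 (n : ℕ) (M : Matroid ℕ) (hE : M.E = Set.Icc 1 n)
    (hrk : RankEq M 2)
    (hchain : ∀ F G, IsCyclicFlat M F → IsCyclicFlat M G → F ⊆ G ∨ G ⊆ F) :
    ∃ a b, 1 ≤ a ∧ a < b ∧ b ≤ n ∧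
      ∃ N : Matroid ℕ, IsSchubert2 n a b N ∧ MatroidIso M N := by
  obtain ⟨B₀, hB₀⟩ := M.exists_isBase
  obtain ⟨x₀, y₀, -, rfl⟩ := ncard_eq_two.1 (hrk _ hB₀)
  obtain ⟨e, he, hcl⟩ := exists_isNonloop_forall_isCircuit_pair_subset hchain
    (hB₀.indep.isNonloop_of_mem (mem_insert x₀ _))
  have hbase := isBase_iff_of_rankEq_two hrk hcl
  obtain ⟨f, a, b, ha, hab, hf, hlev⟩ := exists_bijOn_Icc_lt_iff_of_subset (Finset.Icc 1 n)
    (M.closure_mono (empty_subset {e}) : M.loops ⊆ M.closure {e})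
  replace hf : BijOn f M.E (Icc 1 n) := by simpa [hE] using hf
  replace hlev : ∀ x ∈ M.E, _ := fun x hx ↦ hlev x (by simpa [hE] using hx)
  refine ⟨a, b, ha, ?_, ?_, _, isSchubert2_map hf hab (fun x hx ↦ (hlev x hx).1)
    (fun x hx ↦ (hlev x hx).2) hbase, matroidIso_map M f hf.injOn⟩
  · have hae : a ≤ f e := not_lt.1 (mt (hlev e he.mem_ground).1.2 he.not_isLoop)
    exact hae.trans_lt ((hlev e he.mem_ground).2.1 (M.mem_closure_self e he.mem_ground))
  · obtain ⟨x, y, -, -, ⟨hyE, hyP⟩, -⟩ := (hbase _).1 hB₀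
    exact (not_lt.1 (mt (hlev y hyE).2.2 hyP)).trans (hf.mapsTo hyE).2

end PaperPOAM
end
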